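/- arXiv:2209.00594 — 5 statements merged into one kernel-verified Lean document; each statement's English description precedes it below -/
import Mathlib

section
/- Let G be a finite simple graph and let a, b, c ∈ V(G) be three distinct vertices. If for every vertex v ∈ V(G) at least two of a, b, c lie in a common connected component of G − v, then G contains an {a,b,c}-rooted K_3-minor. -/
/-!
Among all `a`–`b` paths `P` avoiding `c`, choose one for which the component `K` of `c` in
`G - P` is maximal under inclusion. If two distinct vertices of `P` have a neighbour in `K`,
cutting `P` just after the first of them yields, together with `K`, the three branch sets.
Otherwise `K` attaches to `P` at a single vertex `w` (a walk from `c` to `b` provides one).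
Every walk from `c` to `a` or `b` passes through `w`, so the hypothesis at `w` gives an
`a`–`b` path `Q` avoiding `w`. Such a `Q` cannot meet `K`, hence the component of `c` in
`G - Q` contains `K ∪ {w}`, contradicting maximality.
-/

open SimpleGraph

/-- Two vertex sets are adjacent if some edge of `G` has one endpoint in each. -/
def SetsAdjacent {V : Type*} (G : SimpleGraph V) (X Y : Set V) : Prop :=
  ∃ x ∈ X, ∃ y ∈ Y, G.Adj x y

/-- `B : Fin t → Set V` are the branch-sets of a `K_t`-minor in `G`:
pairwise disjoint nonempty sets, each inducing a connected subgraph,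
and pairwise adjacent. -/
def IsKMinor {V : Type*} (G : SimpleGraph V) (t : ℕ) (B : Fin t → Set V) : Prop :=
  (∀ i, (B i).Nonempty) ∧
  (∀ i j, i ≠ j → Disjoint (B i) (B j)) ∧
  (∀ i, (G.induce (B i)).Connected) ∧
  (∀ i j, i ≠ j → SetsAdjacent G (B i) (B j))

/-- A separation of `G`: `A ∪ B = V(G)`, both sides have a private vertex, and
no edge joins `A ∖ B` to `B ∖ A`. -/
def IsSeparation {V : Type*} (G : SimpleGraph V) (A B : Set V) : Prop :=
  A ∪ B = Set.univ ∧ (A \ B).Nonempty ∧ (B \ A).Nonempty ∧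
  ∀ a ∈ A \ B, ∀ b ∈ B \ A, ¬ G.Adj a b

theorem SetsAdjacent.symm {V : Type*} {G : SimpleGraph V} {X Y : Set V}
    (h : SetsAdjacent G X Y) : SetsAdjacent G Y X := by
  obtain ⟨x, hx, y, hy, hxy⟩ := h
  exact ⟨y, hy, x, hx, hxy.symm⟩

namespace SimpleGraph

variable {V : Type*} {G : SimpleGraph V}

/-- The vertex set of the component of `c` in `G - S`; it is empty when `c ∈ S`. -/
def componentAvoiding (G : SimpleGraph V) (S : Set V) (c : V) : Set V :=
  {v | ∃ q : G.Walk c v, ∀ w ∈ q.support, w ∉ S}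

def attachments (G : SimpleGraph V) (S : Set V) (c : V) : Set V :=
  {x ∈ S | ∃ z ∈ G.componentAvoiding S c, G.Adj z x}

section componentAvoiding

variable {S T : Set V} {c : V}

theorem notMem_of_mem_componentAvoiding {v : V} (hv : v ∈ G.componentAvoiding S c) : v ∉ S := by
  obtain ⟨q, hq⟩ := hv
  exact hq v q.end_mem_support

theorem mem_componentAvoiding_self (hc : c ∉ S) : c ∈ G.componentAvoiding S c :=
  ⟨Walk.nil, by simpa using hc⟩

theorem mem_componentAvoiding_of_adj {z w : V} (hz : z ∈ G.componentAvoiding S c)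
    (hzw : G.Adj z w) (hw : w ∉ S) : w ∈ G.componentAvoiding S c := by
  obtain ⟨q, hq⟩ := hz
  refine ⟨q.concat hzw, fun x hx => ?_⟩
  rw [Walk.support_concat, List.mem_append, List.mem_singleton] at hx
  rcases hx with hx | rfl
  exacts [hq x hx, hw]

theorem Walk.support_subset_componentAvoiding {v : V} (q : G.Walk c v)
    (hq : ∀ w ∈ q.support, w ∉ S) : ∀ w ∈ q.support, w ∈ G.componentAvoiding S c := by
  classical
  exact fun w hw =>
    ⟨q.takeUntil w hw, fun x hx => hq x (q.support_takeUntil_subset_support hw hx)⟩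

theorem componentAvoiding_subset (h : ∀ v ∈ G.componentAvoiding S c, v ∉ T) :
    G.componentAvoiding S c ⊆ G.componentAvoiding T c := by
  rintro v ⟨q, hq⟩
  exact ⟨q, fun w hw => h w (q.support_subset_componentAvoiding hq w hw)⟩

theorem induce_componentAvoiding_connected (hc : c ∉ S) :
    (G.induce (G.componentAvoiding S c)).Connected :=
  induce_connected_of_patches c (mem_componentAvoiding_self hc) fun {_} ⟨q, hq⟩ =>
    ⟨{w | w ∈ q.support}, q.support_subset_componentAvoiding hq, q.start_mem_support,
      q.end_mem_support, q.connected_induce_support.preconnected _ _⟩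

theorem Walk.exists_mem_attachments_of_exit {u v : V} (q : G.Walk u v)
    (hu : u ∈ G.componentAvoiding S c) (hv : v ∉ G.componentAvoiding S c) :
    ∃ x ∈ q.support, x ∈ G.attachments S c := by
  induction q with
  | nil => exact absurd hu hv
  | @cons u w v hadj q ih =>
    by_cases hw : w ∈ S
    · exact ⟨w, by simp, hw, u, hu, hadj⟩
    · obtain ⟨x, hx, hxN⟩ := ih (mem_componentAvoiding_of_adj hu hadj hw) hv
      exact ⟨x, by simp [hx], hxN⟩

theorem Walk.exists_mem_attachments {v : V} (q : G.Walk c v) (hc : c ∉ S) (hv : v ∈ S) :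
    ∃ x ∈ q.support, x ∈ G.attachments S c :=
  q.exists_mem_attachments_of_exit (mem_componentAvoiding_self hc)
    fun hv' => notMem_of_mem_componentAvoiding hv' hv

end componentAvoiding

theorem Walk.exists_append_of_exists_mem {u v : V} (p : G.Walk u v) (P : V → Prop)
    (h : ∃ x ∈ p.support, P x) :
    ∃ x, P x ∧ ∃ (t : G.Walk u x) (d : G.Walk x v), t.append d = p ∧
      ∀ z ∈ t.support, P z → z = x := by
  induction p with
  | nil =>
    obtain ⟨x, hx, hPx⟩ := h
    rw [Walk.support_nil, List.mem_singleton] at hx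
    subst hx
    exact ⟨x, hPx, Walk.nil, Walk.nil, rfl, by simp⟩
  | @cons u w v hadj q ih =>
    by_cases hu : P u
    · exact ⟨u, hu, Walk.nil, Walk.cons hadj q, rfl, by simp⟩
    · have hq : ∃ x ∈ q.support, P x := by
        obtain ⟨x, hx, hPx⟩ := h
        rw [Walk.support_cons, List.mem_cons] at hx
        rcases hx with rfl | hx
        exacts [absurd hPx hu, ⟨x, hx, hPx⟩]
      obtain ⟨x, hPx, t, d, rfl, hfirst⟩ := ih hq
      refine ⟨x, hPx, Walk.cons hadj t, d, rfl, fun z hz hPz => ?_⟩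
      rw [Walk.support_cons, List.mem_cons] at hz
      rcases hz with rfl | hz
      exacts [absurd hPz hu, hfirst z hz hPz]

theorem exists_isKMinor_three_of_branchSets {A B C : Set V} {a b c : V}
    (ha : a ∈ A) (hb : b ∈ B) (hc : c ∈ C)
    (hAB : Disjoint A B) (hAC : Disjoint A C) (hBC : Disjoint B C)
    (hA : (G.induce A).Connected) (hB : (G.induce B).Connected) (hC : (G.induce C).Connected)
    (hAB' : SetsAdjacent G A B) (hAC' : SetsAdjacent G A C) (hBC' : SetsAdjacent G B C) :
    ∃ Bs : Fin 3 → Set V, IsKMinor G 3 Bs ∧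
      ∀ i, (Bs i ∩ ({a, b, c} : Set V)).Nonempty := by
  refine ⟨![A, B, C],
    ⟨fun i => ?_, fun i j hij => ?_, fun i => ?_, fun i j hij => ?_⟩, fun i => ?_⟩
  all_goals fin_cases i
  all_goals try fin_cases j
  all_goals first
    | exact absurd rfl hij
    | simp only [Fin.reduceFinMk, Fin.isValue, Matrix.cons_val]
  all_goals first
    | assumption | exact ⟨_, ha⟩ | exact ⟨_, hb⟩ | exact ⟨_, hc⟩
    | exact ⟨a, ha, by simp⟩ | exact ⟨b, hb, by simp⟩ | exact ⟨c, hc, by simp⟩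
    | exact Disjoint.symm ‹_› | exact SetsAdjacent.symm ‹_›

theorem exists_isKMinor_three_of_path {a b c x y : V} {K : Set V} (p : G.Walk a b)
    (hp : p.IsPath) (hcK : c ∈ K) (hK : (G.induce K).Connected)
    (hpK : ∀ v ∈ p.support, v ∉ K)
    (hx : x ∈ p.support) (hy : y ∈ p.support) (hxy : x ≠ y)
    (hxK : ∃ z ∈ K, G.Adj z x) (hyK : ∃ z ∈ K, G.Adj z y) :
    ∃ Bs : Fin 3 → Set V, IsKMinor G 3 Bs ∧
      ∀ i, (Bs i ∩ ({a, b, c} : Set V)).Nonempty := by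
  obtain ⟨x', hx'K, t, d, rfl, hfirst⟩ :=
    p.exists_append_of_exists_mem (fun v => ∃ z ∈ K, G.Adj z v) ⟨x, hx, hxK⟩
  obtain ⟨y', hy', hy'K, hy'x'⟩ :
      ∃ y' ∈ (t.append d).support, (∃ z ∈ K, G.Adj z y') ∧ y' ≠ x' := by
    by_cases h : x = x'
    · exact ⟨y, hy, hyK, h ▸ hxy.symm⟩
    · exact ⟨x, hx, hxK, h⟩
  have hy't : y' ∉ t.support := fun h => hy'x' (hfirst y' h hy'K)
  cases d with
  | nil => exact absurd (by simpa using hy') hy't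
  | cons hadj d' =>
    have hy'd' : y' ∈ d'.support := by
      simpa [Walk.mem_support_append_iff, hy't, hy'x'] using hy'
    have hdisj : ∀ v ∈ t.support, ∀ w ∈ d'.support, v ≠ w := by
      have := hp.support_nodup
      rw [Walk.support_append, Walk.support_cons, List.tail_cons, List.nodup_append] at this
      exact this.2.2
    obtain ⟨z, hz, hzx'⟩ := hx'K
    obtain ⟨z', hz', hz'y'⟩ := hy'K
    exact exists_isKMinor_three_of_branchSets (A := {v | v ∈ t.support})
      (B := {v | v ∈ d'.support}) t.start_mem_support d'.end_mem_support hcK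
      (Set.disjoint_left.2 fun v hv hv' => hdisj v hv v hv' rfl)
      (Set.disjoint_left.2 fun v hv => hpK v ((Walk.mem_support_append_iff _ _).2 (.inl hv)))
      (Set.disjoint_left.2 fun v hv =>
        hpK v ((Walk.mem_support_append_iff _ _).2 (.inr (List.mem_cons_of_mem _ hv))))
      t.connected_induce_support d'.connected_induce_support hK
      ⟨x', t.end_mem_support, _, d'.start_mem_support, hadj⟩
      ⟨x', t.end_mem_support, z, hz, hzx'.symm⟩ ⟨y', hy'd', z', hz', hz'y'.symm⟩

def JoinsTwoAvoiding (G : SimpleGraph V) (a b c w : V) : Prop :=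
  (∃ q : G.Walk a b, w ∉ q.support) ∨ (∃ q : G.Walk c a, w ∉ q.support) ∨
    ∃ q : G.Walk c b, w ∉ q.support

theorem joinsTwoAvoiding_of_exists {a b c w : V}
    (h : ∃ x ∈ ({a, b, c} : Set V), ∃ y ∈ ({a, b, c} : Set V),
      x ≠ y ∧ ∃ q : G.Walk x y, w ∉ q.support) :
    G.JoinsTwoAvoiding a b c w := by
  obtain ⟨x, hx, y, hy, hxy, q, hq⟩ := h
  have hq' : w ∉ q.reverse.support := by simpa using hq
  simp only [Set.mem_insert_iff, Set.mem_singleton_iff] at hx hy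
  rcases hx with rfl | rfl | rfl <;> rcases hy with rfl | rfl | rfl
  all_goals first
    | exact absurd rfl hxy
    | exact Or.inl ⟨_, hq⟩ | exact Or.inl ⟨_, hq'⟩
    | exact Or.inr (Or.inl ⟨_, hq⟩) | exact Or.inr (Or.inl ⟨_, hq'⟩)
    | exact Or.inr (Or.inr ⟨_, hq⟩) | exact Or.inr (Or.inr ⟨_, hq'⟩)

theorem exists_path_componentAvoiding_ssubset {a b c w : V} (p : G.Walk a b)
    (hc : c ∉ p.support) (hw : w ∈ G.attachments {v | v ∈ p.support} c)
    (hN : ∀ x ∈ G.attachments {v | v ∈ p.support} c, x = w)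
    (hjoin : G.JoinsTwoAvoiding a b c w) :
    ∃ q : G.Walk a b, q.IsPath ∧ c ∉ q.support ∧
      G.componentAvoiding {v | v ∈ p.support} c ⊂
        G.componentAvoiding {v | v ∈ q.support} c := by
  classical
  set K := G.componentAvoiding {v | v ∈ p.support} c
  have hthrough {u : V} (q : G.Walk c u) (hu : u ∈ p.support) : w ∈ q.support := by
    obtain ⟨x, hxq, hxN⟩ := q.exists_mem_attachments (S := {v | v ∈ p.support}) hc hu
    exact hN x hxN ▸ hxq
  rcases hjoin with ⟨q, hwq⟩ | ⟨q, hwq⟩ | ⟨q, hwq⟩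
  · have hwq' : w ∉ q.bypass.support := fun h => hwq (q.support_bypass_subset_support h)
    -- `K` could only be entered through its unique attachment `w`.
    have hKq : ∀ v ∈ K, v ∉ q.bypass.support := by
      intro v hvK hvq
      obtain ⟨x, hx, hxN⟩ := (q.bypass.dropUntil v hvq).exists_mem_attachments_of_exit hvK
        fun hb => notMem_of_mem_componentAvoiding hb p.end_mem_support
      exact hwq' (hN x hxN ▸ q.bypass.support_dropUntil_subset_support hvq hx)
    obtain ⟨hwp, z, hzK, hzw⟩ := hw
    refine ⟨q.bypass, q.bypass_isPath, hKq c (mem_componentAvoiding_self hc),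
      (Set.ssubset_iff_of_subset (componentAvoiding_subset hKq)).2 ⟨w, ?_, ?_⟩⟩
    · exact mem_componentAvoiding_of_adj (componentAvoiding_subset hKq hzK) hzw hwq'
    · exact fun hwK => notMem_of_mem_componentAvoiding hwK hwp
  · exact absurd (hthrough q p.start_mem_support) hwq
  · exact absurd (hthrough q p.end_mem_support) hwq

theorem exists_path_two_attachments [Finite V] {a b c : V}
    (hjoin : ∀ w, G.JoinsTwoAvoiding a b c w) :
    ∃ p : G.Walk a b, p.IsPath ∧ c ∉ p.support ∧
      ∃ x ∈ G.attachments {v | v ∈ p.support} c,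
        ∃ y ∈ G.attachments {v | v ∈ p.support} c, x ≠ y := by
  classical
  have hne : {p : G.Walk a b | p.IsPath ∧ c ∉ p.support}.Nonempty := by
    rcases hjoin c with ⟨q, hq⟩ | ⟨q, hq⟩ | ⟨q, hq⟩
    · exact ⟨q.bypass, q.bypass_isPath, fun h => hq (q.support_bypass_subset_support h)⟩
    all_goals exact absurd q.start_mem_support hq
  obtain ⟨p, ⟨hp, hcp⟩, hmax⟩ := Set.Finite.exists_maximalFor'
    (fun p : G.Walk a b => G.componentAvoiding {v | v ∈ p.support} c) _ (Set.toFinite _) hne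
  refine ⟨p, hp, hcp, ?_⟩
  obtain ⟨x, hx⟩ : (G.attachments {v | v ∈ p.support} c).Nonempty := by
    rcases hjoin a with ⟨q, hq⟩ | ⟨q, hq⟩ | ⟨q, hq⟩
    · exact absurd q.start_mem_support hq
    · exact absurd q.end_mem_support hq
    · obtain ⟨x, -, hx⟩ :=
        q.exists_mem_attachments (S := {v | v ∈ p.support}) hcp p.end_mem_support
      exact ⟨x, hx⟩
  by_contra! hN
  obtain ⟨q, hq, hcq, hssub⟩ := exists_path_componentAvoiding_ssubset p hcp hx
    (fun y hy => (hN x hx y hy).symm) (hjoin _)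
  exact hssub.not_subset (hmax ⟨hq, hcq⟩ hssub.subset)

end SimpleGraph

theorem stmt3_general {V : Type*} [Fintype V] (G : SimpleGraph V) (a b c : V)
    (h : ∀ v : V, ∃ x ∈ ({a, b, c} : Set V), ∃ y ∈ ({a, b, c} : Set V),
      x ≠ y ∧ ∃ p : G.Walk x y, v ∉ p.support) :
    ∃ B : Fin 3 → Set V, IsKMinor G 3 B ∧
      ∀ i, (B i ∩ ({a, b, c} : Set V)).Nonempty := by
  obtain ⟨p, hp, hcp, x, ⟨hxp, hxK⟩, y, ⟨hyp, hyK⟩, hxy⟩ :=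
    exists_path_two_attachments fun w => joinsTwoAvoiding_of_exists (h w)
  exact exists_isKMinor_three_of_path p hp (mem_componentAvoiding_self hcp)
    (induce_componentAvoiding_connected hcp)
    (fun v hv hvK => notMem_of_mem_componentAvoiding hvK hv) hxp hyp hxy hxK hyK

/-- If for every vertex `v` at least two of `a, b, c` lie in a common component of
`G − v` (i.e. are joined by a walk avoiding `v`), then `G` has an
`{a,b,c}`-rooted `K₃`-minor. -/
theorem stmt3 {V : Type*} [Fintype V] (G : SimpleGraph V) (a b c : V)
    (hab : a ≠ b) (hac : a ≠ c) (hbc : b ≠ c)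
    (h : ∀ v : V, ∃ x ∈ ({a, b, c} : Set V), ∃ y ∈ ({a, b, c} : Set V),
      x ≠ y ∧ ∃ p : G.Walk x y, v ∉ p.support) :
    ∃ B : Fin 3 → Set V, IsKMinor G 3 B ∧
      ∀ i, (B i ∩ ({a, b, c} : Set V)).Nonempty :=
  stmt3_general G a b c h
end

section
/- Call a pair (G, S), where G is a finite simple graph and S ⊆ V(G), a counterexample if χ(G) = 4, S is colorful in G, and G contains no S-rooted K_4-minor. If (G, S) is a counterexample with |V(G)| minimum among all counterexamples, then G is 2-connected, i.e. |V(G)| ≥ 3 and G has no separation of order at most 1. -/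
open SimpleGraph

/-- `(G, S)` is a counterexample: `χ(G) = 4`, `S` is colorful in `G`, and `G` has
no `S`-rooted `K₄`-minor. -/
def Counterexample {V : Type} (G : SimpleGraph V) (S : Set V) : Prop :=
  G.chromaticNumber = 4 ∧
  (∀ c : G.Coloring (Fin 4), ∀ k : Fin 4, ∃ v ∈ S, c v = k) ∧
  ¬ ∃ B : Fin 4 → Set V, IsKMinor G 4 B ∧ ∀ i, (B i ∩ S).Nonempty

/-!
If one side of a separation `(A, B)` of order at most one is colorful for the roots `S ∪ (A ∩ B)`,
minimality gives a rooted `K₄`-minor of that side; when `A ∩ B = {v}`, the branch set containing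
`v` can absorb the other side, which is connected and (by a second appeal to minimality) contains
a vertex of `S`. Otherwise each side has a 4-coloring avoiding a common color `k` on its roots;
a transposition fixing `k` matches them at the separator, and gluing gives a coloring of `G`
avoiding `k` on `S`.
-/

def IsColorful {V : Type*} (G : SimpleGraph V) (n : ℕ) (T : Set V) : Prop :=
  ∀ c : G.Coloring (Fin n), ∀ k : Fin n, ∃ v ∈ T, c v = k

def HasRootedKMinor {V : Type*} (G : SimpleGraph V) (t : ℕ) (S : Set V) : Prop :=
  ∃ B : Fin t → Set V, IsKMinor G t B ∧ ∀ i, (B i ∩ S).Nonempty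

def NoSmallerCounterexample (V : Type) [Fintype V] : Prop :=
  ∀ (W : Type) [Fintype W] (H : SimpleGraph W) (T : Set W),
    Counterexample H T → Fintype.card V ≤ Fintype.card W

section General

variable {V : Type*} {G : SimpleGraph V}

lemma IsColorful.chromaticNumber_eq {n : ℕ} {T : Set V} (h : IsColorful G n T)
    (hG : G.Colorable n) : G.chromaticNumber = n :=
  (chromaticNumber_eq_iff_forall_surjective hG).2 fun c k =>
    let ⟨v, _, hv⟩ := h c k
    ⟨v, hv⟩

lemma not_isColorful_iff {n : ℕ} {T : Set V} :
    ¬ IsColorful G n T ↔ ∃ (c : G.Coloring (Fin n)) (k : Fin n), ∀ v ∈ T, c v ≠ k := by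
  simp [IsColorful]

lemma exists_coloring_forall_ne_of_not_isColorful {n : ℕ} {T : Set V}
    (h : ¬ IsColorful G n T) (k : Fin n) : ∃ c : G.Coloring (Fin n), ∀ v ∈ T, c v ≠ k := by
  obtain ⟨c, m, hm⟩ := not_isColorful_iff.1 h
  refine ⟨G.recolorOfEquiv (Equiv.swap m k) c, fun v hv hvk => hm v hv ?_⟩
  simpa [Equiv.swap_apply_eq_iff] using hvk

lemma induce_image_val_connected {X : Set V} {s : Set X}
    (h : ((G.induce X).induce s).Connected) : (G.induce (Subtype.val '' s)).Connected :=
  h.map (induceHom (Embedding.induce X).toHom fun x hx => Set.mem_image_of_mem _ hx)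
    (by rintro ⟨_, x, hx, rfl⟩; exact ⟨⟨x, hx⟩, rfl⟩)

lemma IsKMinor.image_val {X : Set V} {t : ℕ} {B : Fin t → Set X}
    (h : IsKMinor (G.induce X) t B) : IsKMinor G t fun i => Subtype.val '' B i := by
  obtain ⟨hne, hdisj, hconn, hadj⟩ := h
  refine ⟨fun i => (hne i).image _, fun i j hij => ?_,
    fun i => induce_image_val_connected (hconn i), fun i j hij => ?_⟩
  · exact (Set.disjoint_image_iff Subtype.val_injective).2 (hdisj i j hij)
  · obtain ⟨x, hx, y, hy, hxy⟩ := hadj i j hij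
    exact ⟨x, Set.mem_image_of_mem _ hx, y, Set.mem_image_of_mem _ hy, hxy⟩

lemma exists_isKMinor_of_hasRootedKMinor_induce {X R : Set V} {t : ℕ}
    (h : HasRootedKMinor (G.induce X) t (Subtype.val ⁻¹' R)) :
    ∃ C : Fin t → Set V, IsKMinor G t C ∧ (∀ i, C i ⊆ X) ∧ ∀ i, (C i ∩ R).Nonempty := by
  obtain ⟨B, hB, hroot⟩ := h
  refine ⟨_, hB.image_val, fun i => Subtype.coe_image_subset X (B i), fun i => ?_⟩
  obtain ⟨x, hxB, hxR⟩ := hroot i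
  exact ⟨x, Set.mem_image_of_mem _ hxB, hxR⟩

lemma hasRootedKMinor_of_inter_eq_singleton {A B S : Set V} {v : V} {t : ℕ}
    {C : Fin t → Set V} (hC : IsKMinor G t C) (hCA : ∀ i, C i ⊆ A)
    (hroot : ∀ i, (C i ∩ (S ∪ {v})).Nonempty) (hv : A ∩ B = {v})
    (hB : (G.induce B).Connected) (hSB : (S ∩ B).Nonempty) : HasRootedKMinor G t S := by
  classical
  obtain ⟨hne, hdisj, hconn, hadj⟩ := hC
  have hvB : v ∈ B := (hv ▸ rfl : v ∈ A ∩ B).2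
  have hCB : ∀ i, v ∉ C i → Disjoint B (C i) := fun i hvC =>
    Set.disjoint_left.2 fun x hxB hxC => by
      obtain rfl : x = v := by rw [← Set.mem_singleton_iff, ← hv]; exact ⟨hCA i hxC, hxB⟩
      exact hvC hxC
  let D : Fin t → Set V := fun i => if v ∈ C i then C i ∪ B else C i
  have hCD : ∀ i, C i ⊆ D i := fun i => by
    by_cases h : v ∈ C i <;> simp [D, h]
  have hDdisj : ∀ i j, i ≠ j → v ∈ C i → Disjoint (D i) (D j) := fun i j hij hvi => by
    have hvj : v ∉ C j := Set.disjoint_left.1 (hdisj i j hij) hvi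
    simpa [D, hvi, hvj] using ⟨hdisj i j hij, hCB j hvj⟩
  refine ⟨D, ⟨fun i => (hne i).mono (hCD i), fun i j hij => ?_, fun i => ?_, fun i j hij => ?_⟩,
    fun i => ?_⟩
  · by_cases hvi : v ∈ C i
    · exact hDdisj i j hij hvi
    by_cases hvj : v ∈ C j
    · exact (hDdisj j i hij.symm hvj).symm
    simpa [D, hvi, hvj] using hdisj i j hij
  · by_cases hvi : v ∈ C i
    · rw [show D i = C i ∪ B from if_pos hvi]
      exact induce_union_connected (hconn i).preconnected hB.preconnected ⟨v, hvi, hvB⟩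
    · rw [show D i = C i from if_neg hvi]
      exact hconn i
  · obtain ⟨x, hx, y, hy, hxy⟩ := hadj i j hij
    exact ⟨x, hCD i hx, y, hCD j hy, hxy⟩
  · by_cases hvi : v ∈ C i
    · obtain ⟨s, hs⟩ := hSB
      exact ⟨s, by simp [D, hvi, hs.2], hs.1⟩
    · obtain ⟨x, hxC, hx⟩ := hroot i
      refine ⟨x, hCD i hxC, hx.resolve_right ?_⟩
      rintro rfl
      exact hvi hxC

lemma IsSeparation.symm {A B : Set V} (h : IsSeparation G A B) : IsSeparation G B A := by
  obtain ⟨hU, hAB, hBA, hE⟩ := h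
  exact ⟨Set.union_comm A B ▸ hU, hBA, hAB, fun b hb a ha hba => hE a ha b hb hba.symm⟩

section Separation

variable {A B : Set V} (hU : A ∪ B = Set.univ) (hE : ∀ a ∈ A \ B, ∀ b ∈ B \ A, ¬ G.Adj a b)
include hU hE

lemma mem_and_mem_or_mem_and_mem_of_adj {x y : V} (h : G.Adj x y) :
    (x ∈ A ∧ y ∈ A) ∨ (x ∈ B ∧ y ∈ B) := by
  have hx : x ∈ A ∪ B := hU ▸ Set.mem_univ x
  have hy : y ∈ A ∪ B := hU ▸ Set.mem_univ y
  grind [G.adj_symm h]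

lemma exists_coloring_extend {α : Type*} (cA : (G.induce A).Coloring α)
    (cB : (G.induce B).Coloring α)
    (hagree : ∀ x (hA : x ∈ A) (hB : x ∈ B), cA ⟨x, hA⟩ = cB ⟨x, hB⟩) :
    ∃ c : G.Coloring α, (∀ x (hA : x ∈ A), c x = cA ⟨x, hA⟩) ∧
      ∀ x (hB : x ∈ B), c x = cB ⟨x, hB⟩ := by
  classical
  have hB_of_notMem : ∀ x, x ∉ A → x ∈ B := fun x hx =>
    ((hU ▸ Set.mem_univ x : x ∈ A ∪ B)).resolve_left hx
  let f : V → α := fun x => if hA : x ∈ A then cA ⟨x, hA⟩ else cB ⟨x, hB_of_notMem x hA⟩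
  have hfA : ∀ x (hA : x ∈ A), f x = cA ⟨x, hA⟩ := fun x hA => dif_pos hA
  have hfB : ∀ x (hB : x ∈ B), f x = cB ⟨x, hB⟩ := by
    intro x hB
    by_cases hA : x ∈ A
    · exact (dif_pos hA).trans (hagree x hA hB)
    · exact dif_neg hA
  refine ⟨Coloring.mk f fun {x y} hxy => ?_, hfA, hfB⟩
  rcases mem_and_mem_or_mem_and_mem_of_adj hU hE hxy with ⟨hx, hy⟩ | ⟨hx, hy⟩
  · rw [hfA x hx, hfA y hy]
    exact cA.valid (show G.Adj x y from hxy)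
  · rw [hfB x hx, hfB y hy]
    exact cB.valid (show G.Adj x y from hxy)

lemma exists_reachable_induce_of_walk {x y : V} (p : G.Walk x y) (hx : x ∈ B) (hy : y ∈ A) :
    ∃ z, ∃ hz : z ∈ A ∩ B, (G.induce B).Reachable ⟨x, hx⟩ ⟨z, hz.2⟩ := by
  induction p with
  | nil => exact ⟨_, ⟨hy, hx⟩, .rfl⟩
  | @cons x w y hxw q ih =>
    by_cases hxA : x ∈ A
    · exact ⟨x, ⟨hxA, hx⟩, .rfl⟩
    · have hwB : w ∈ B :=
        ((mem_and_mem_or_mem_and_mem_of_adj hU hE hxw).resolve_left fun h => hxA h.1).2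
      obtain ⟨z, hz, hwz⟩ := ih hwB hy
      exact ⟨z, hz, (Adj.reachable (show (G.induce B).Adj ⟨x, hx⟩ ⟨w, hwB⟩ from hxw)).trans hwz⟩

lemma induce_connected_of_inter_eq_singleton (hG : G.Connected) {v : V} (hv : A ∩ B = {v}) :
    (G.induce B).Connected := by
  have hvAB : v ∈ A ∩ B := hv ▸ rfl
  rw [connected_iff_exists_forall_reachable]
  refine ⟨⟨v, hvAB.2⟩, fun ⟨x, hx⟩ => ?_⟩
  obtain ⟨z, hz, hxz⟩ := exists_reachable_induce_of_walk hU hE (hG x v).some hx hvAB.1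
  obtain rfl : z = v := by simpa [hv] using hz
  exact hxz.symm

lemma IsColorful.induce_or_induce {n : ℕ} {S : Set V} (hAB : (A ∩ B).Subsingleton)
    (hS : IsColorful G n S) :
    IsColorful (G.induce A) n (Subtype.val ⁻¹' (S ∪ A ∩ B)) ∨
      IsColorful (G.induce B) n (Subtype.val ⁻¹' (S ∪ A ∩ B)) := by
  classical
  by_contra! h
  obtain ⟨hA, hB⟩ := h
  obtain ⟨cA, k, hcA⟩ := not_isColorful_iff.1 hA
  obtain ⟨cB, hcB⟩ := exists_coloring_forall_ne_of_not_isColorful hB k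
  obtain ⟨cB', hcB', hagree⟩ : ∃ cB' : (G.induce B).Coloring (Fin n),
      (∀ x ∈ Subtype.val ⁻¹' (S ∪ A ∩ B), cB' x ≠ k) ∧
        ∀ x (hA : x ∈ A) (hB : x ∈ B), cA ⟨x, hA⟩ = cB' ⟨x, hB⟩ := by
    rcases hAB.eq_empty_or_singleton with h0 | ⟨v, hv⟩
    · exact ⟨cB, hcB, fun x hA hB => (h0.subset ⟨hA, hB⟩).elim⟩
    have hvAB : v ∈ A ∩ B := hv ▸ rfl
    set σ := Equiv.swap (cB ⟨v, hvAB.2⟩) (cA ⟨v, hvAB.1⟩)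
    have hσk : σ k = k := Equiv.swap_apply_of_ne_of_ne
      (hcB ⟨v, hvAB.2⟩ (Or.inr hvAB)).symm (hcA ⟨v, hvAB.1⟩ (Or.inr hvAB)).symm
    refine ⟨G.induce B |>.recolorOfEquiv σ cB, fun x hx hxk => hcB x hx ?_, ?_⟩
    · exact σ.injective (hxk.trans hσk.symm)
    · rintro x hxA hxB
      obtain rfl : x = v := by rw [← Set.mem_singleton_iff, ← hv]; exact ⟨hxA, hxB⟩
      simp [σ]
  obtain ⟨c, hcA_eq, hcB_eq⟩ := exists_coloring_extend hU hE cA cB' hagree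
  obtain ⟨s, hs, hsk⟩ := hS c k
  rcases (hU ▸ Set.mem_univ s : s ∈ A ∪ B) with hsA | hsB
  · exact hcA ⟨s, hsA⟩ (Or.inl hs) ((hcA_eq s hsA).symm.trans hsk)
  · exact hcB' ⟨s, hsB⟩ (Or.inl hs) ((hcB_eq s hsB).symm.trans hsk)

lemma IsColorful.induce_of_subset {n : ℕ} {S : Set V} {v : V} (hv : A ∩ B = {v})
    (hB : (G.induce B).Colorable n) (hS : IsColorful G n S) (hSA : S ⊆ A) :
    IsColorful (G.induce A) n (Subtype.val ⁻¹' S) := by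
  classical
  intro cA k
  have hvAB : v ∈ A ∩ B := hv ▸ rfl
  let cB₀ := hB.some
  let cB := G.induce B |>.recolorOfEquiv
    (Equiv.swap (cB₀ ⟨v, hvAB.2⟩) (cA ⟨v, hvAB.1⟩)) cB₀
  obtain ⟨c, hc, -⟩ := exists_coloring_extend hU hE cA cB fun x hxA hxB => by
    obtain rfl : x = v := by rw [← Set.mem_singleton_iff, ← hv]; exact ⟨hxA, hxB⟩
    simp [cB]
  obtain ⟨s, hs, hsk⟩ := hS c k
  exact ⟨⟨s, hSA hs⟩, hs, (hc s (hSA hs)).symm.trans hsk⟩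

end Separation

end General

namespace Counterexample

variable {V : Type} {G : SimpleGraph V} {S : Set V}

lemma colorable (hce : Counterexample G S) : G.Colorable 4 :=
  chromaticNumber_le_iff_colorable.1 hce.1.le

lemma isColorful (hce : Counterexample G S) : IsColorful G 4 S :=
  hce.2.1

lemma not_hasRootedKMinor (hce : Counterexample G S) : ¬ HasRootedKMinor G 4 S :=
  hce.2.2

variable [Fintype V]

lemma exists_isKMinor_of_isColorful_induce (hce : Counterexample G S)
    (hmin : NoSmallerCounterexample V) {X R : Set V} {x₀ : V} (hx₀ : x₀ ∉ X)
    (hX : IsColorful (G.induce X) 4 (Subtype.val ⁻¹' R)) :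
    ∃ C : Fin 4 → Set V, IsKMinor G 4 C ∧ (∀ i, C i ⊆ X) ∧ ∀ i, (C i ∩ R).Nonempty := by
  classical
  refine exists_isKMinor_of_hasRootedKMinor_induce (by_contra fun h => ?_)
  have hXG : (G.induce X).Colorable 4 := hce.colorable.of_hom (Embedding.induce X).toHom
  have := hmin X (G.induce X) _ ⟨hX.chromaticNumber_eq hXG, hX, h⟩
  have : Fintype.card X < Fintype.card V := by convert Fintype.card_subtype_lt hx₀
  omega

lemma inter_ne_empty_of_isSeparation (hce : Counterexample G S)
    (hmin : NoSmallerCounterexample V) {A B : Set V} (hsep : IsSeparation G A B) :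
    A ∩ B ≠ ∅ := by
  intro h0
  obtain ⟨hU, ⟨a, haA, haB⟩, ⟨b, hbB, hbA⟩, hE⟩ := hsep
  have hside : ∀ {X : Set V} {x₀ : V}, x₀ ∉ X →
      ¬ IsColorful (G.induce X) 4 (Subtype.val ⁻¹' (S ∪ A ∩ B)) := fun hx₀ hX => by
    obtain ⟨C, hC, -, hroot⟩ := hce.exists_isKMinor_of_isColorful_induce hmin hx₀ hX
    exact hce.not_hasRootedKMinor ⟨C, hC, by simpa [h0] using hroot⟩
  rcases hce.isColorful.induce_or_induce hU hE (h0 ▸ Set.subsingleton_empty) with hA | hB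
  exacts [hside hbA hA, hside haB hB]

lemma connected (hce : Counterexample G S) (hmin : NoSmallerCounterexample V) : G.Connected := by
  have hne : Nonempty V := by
    by_contra h
    rw [not_nonempty_iff] at h
    simpa [G.chromaticNumber_eq_zero_of_isEmpty] using hce.1
  refine (connected_iff G).2 ⟨fun u w => by_contra fun huw => ?_, hne⟩
  let A : Set V := {x | G.Reachable u x}
  refine hce.inter_ne_empty_of_isSeparation hmin (A := A) (B := Aᶜ)
    ⟨Set.union_compl_self A, ⟨u, .rfl, fun h => h .rfl⟩, ⟨w, huw, huw⟩, ?_⟩ (Set.inter_compl_self A)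
  exact fun x hx y hy hxy => hy.1 (hx.1.trans hxy.reachable)

lemma not_isColorful_induce_of_inter_eq_singleton (hce : Counterexample G S)
    (hmin : NoSmallerCounterexample V) {A B : Set V} {v : V} (hsep : IsSeparation G A B)
    (hv : A ∩ B = {v}) : ¬ IsColorful (G.induce A) 4 (Subtype.val ⁻¹' (S ∪ A ∩ B)) := by
  intro hA
  obtain ⟨hU, -, ⟨b, hbB, hbA⟩, hE⟩ := hsep
  obtain ⟨C, hC, hCA, hroot⟩ := hce.exists_isKMinor_of_isColorful_induce hmin hbA hA
  have hSB : (S ∩ B).Nonempty := by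
    by_contra! hSB
    have hSA : S ⊆ A := fun s hs => (hU ▸ Set.mem_univ s : s ∈ A ∪ B).resolve_right
      fun hsB => hSB.subset ⟨hs, hsB⟩
    have hBcol := hce.colorable.of_hom (Embedding.induce B).toHom
    obtain ⟨C', hC', -, hroot'⟩ := hce.exists_isKMinor_of_isColorful_induce hmin hbA
      (hce.isColorful.induce_of_subset hU hE hv hBcol hSA)
    exact hce.not_hasRootedKMinor ⟨C', hC', hroot'⟩
  have hBconn := induce_connected_of_inter_eq_singleton hU hE (hce.connected hmin) hv
  exact hce.not_hasRootedKMinor <|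
    hasRootedKMinor_of_inter_eq_singleton hC hCA (by rwa [hv] at hroot) hv hBconn hSB

end Counterexample

/-- A vertex-minimum counterexample is 2-connected: it has at least 3 vertices
and every separation has order at least 2. -/
theorem stmt6 {V : Type} [Fintype V] (G : SimpleGraph V) (S : Set V)
    (hce : Counterexample G S)
    (hmin : ∀ (W : Type) [Fintype W] (H : SimpleGraph W) (T : Set W),
      Counterexample H T → Fintype.card V ≤ Fintype.card W) :
    3 ≤ Fintype.card V ∧
      ∀ A B : Set V, IsSeparation G A B → 2 ≤ (A ∩ B).ncard := by
  refine ⟨?_, fun A B hsep => ?_⟩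
  · have h := G.colorable_of_fintype.chromaticNumber_le
    rw [hce.1] at h
    have : 4 ≤ Fintype.card V := by exact_mod_cast h
    omega
  · by_contra! h
    have hAB : (A ∩ B).Subsingleton := Set.ncard_le_one_iff_subsingleton.1 (by omega)
    rcases hAB.eq_empty_or_singleton with h0 | ⟨v, hv⟩
    · exact hce.inter_ne_empty_of_isSeparation hmin hsep h0
    rcases hce.isColorful.induce_or_induce hsep.1 hsep.2.2.2 hAB with hA | hB
    · exact hce.not_isColorful_induce_of_inter_eq_singleton hmin hsep hv hA
    · exact hce.not_isColorful_induce_of_inter_eq_singleton hmin hsep.symm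
        (by rwa [Set.inter_comm]) (by rwa [Set.inter_comm])
end

section
/- Let G be a finite simple 3-connected graph, let (A,B) be a separation of G of order 3, and suppose x is a cut-vertex of the induced subgraph G[B] (i.e. G[B] is connected but G[B ∖ {x}] is disconnected). Then there exists a vertex c ∈ A ∩ B such that x is the unique neighbor of c in G[B]; in particular, c is an isolated vertex of G[B ∖ {x}]. -/
open SimpleGraph

/-!
Since `G[B ∖ {x}]` has two disjoint components and `|A ∩ B| = 3`, one component `C` meets
`A ∩ B` in at most one vertex. Every neighbour of `C ∖ A` lies in `C ∪ {x}`, so if `C ⊄ A` then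
`((C ∖ A)ᶜ, C ∪ {x})` is a separation of order `|C ∩ A| + 1 ≤ 2`, contradicting 3-connectivity.
Hence `C ⊆ A ∩ B` is a single vertex `c`, whose only possible neighbour in `B` is `x`; it has
one because `G[B]` is connected.
-/

namespace IsSeparation

variable {V : Type*} {G : SimpleGraph V} {A B C : Set V} {x : V}

theorem compl_diff_insert (hsep : IsSeparation G A B) (hx : x ∈ B) (hCB : C ⊆ B \ {x})
    (hCcl : ∀ a ∈ C, ∀ b ∈ B \ {x}, G.Adj a b → b ∈ C) (hCA : ¬ C ⊆ A) :
    IsSeparation G (C \ A)ᶜ (insert x C) := by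
  obtain ⟨hunion, ⟨a, haA, haB⟩, -, hedge⟩ := hsep
  obtain ⟨c, hcC, hcA⟩ := Set.not_subset.mp hCA
  refine ⟨?_, ⟨a, ?_, ?_⟩, ⟨c, Set.mem_insert_of_mem x hcC, fun h => h ⟨hcC, hcA⟩⟩, ?_⟩
  · rw [Set.eq_univ_iff_forall]
    intro v
    by_cases hv : v ∈ C \ A
    · exact Or.inr (Set.mem_insert_of_mem x hv.1)
    · exact Or.inl hv
  · exact fun h => haB (hCB h.1).1
  · rintro (rfl | h)
    exacts [haB hx, haB (hCB h).1]
  · rintro u ⟨-, hu⟩ v ⟨hv, hvA⟩ huv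
    rw [Set.mem_compl_iff, not_not] at hvA
    have hvB : v ∈ B := (hCB hvA.1).1
    by_cases huB : u ∈ B
    · exact hu (Set.mem_insert_of_mem x
        (hCcl v hvA.1 u ⟨huB, fun h => hu (Or.inl h)⟩ huv.symm))
    · have huA : u ∈ A := (Set.eq_univ_iff_forall.mp hunion u).resolve_right huB
      exact hedge u ⟨huA, huB⟩ v ⟨hvB, hvA.2⟩ huv

theorem subset_of_ncard_inter_add_one_lt {k : ℕ}
    (hk : ∀ A' B' : Set V, IsSeparation G A' B' → k ≤ (A' ∩ B').ncard)
    (hsep : IsSeparation G A B) (hx : x ∈ B) (hCB : C ⊆ B \ {x})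
    (hCcl : ∀ a ∈ C, ∀ b ∈ B \ {x}, G.Adj a b → b ∈ C) (hCA : (C ∩ A).ncard + 1 < k) :
    C ⊆ A := by
  by_contra hCA'
  have horder := hk _ _ (hsep.compl_diff_insert hx hCB hCcl hCA')
  have hxC : x ∉ C := fun h => (hCB h).2 rfl
  have hinter : (C \ A)ᶜ ∩ insert x C = insert x (C ∩ A) := by
    ext v
    by_cases hv : v = x
    · subst hv; simp [hxC]
    · simp only [Set.mem_inter_iff, Set.mem_compl_iff, Set.mem_sdiff, Set.mem_insert_iff, hv,
        false_or]
      tauto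
  have := Set.ncard_insert_le x (C ∩ A)
  rw [hinter] at horder
  omega

end IsSeparation

namespace SimpleGraph

variable {V : Type*} {G : SimpleGraph V}

theorem ConnectedComponent.mem_image_val_supp_of_adj {U : Set V}
    (K : (G.induce U).ConnectedComponent) {a b : V} (ha : a ∈ Subtype.val '' K.supp)
    (hb : b ∈ U) (hab : G.Adj a b) : b ∈ Subtype.val '' K.supp := by
  obtain ⟨a, ha, rfl⟩ := ha
  exact ⟨⟨b, hb⟩, (K.mem_supp_congr_adj (v := a) (w := ⟨b, hb⟩) hab).1 ha, rfl⟩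

theorem exists_connectedComponent_induce_two_mul_ncard_inter_le {U S : Set V}
    (hU : U.Nonempty) (hconn : ¬ (G.induce U).Connected) (hS : S.Finite) :
    ∃ K : (G.induce U).ConnectedComponent,
      2 * (Subtype.val '' K.supp ∩ S).ncard ≤ S.ncard := by
  have := hU.to_subtype
  obtain ⟨u, v, huv⟩ : ∃ u v : U, ¬ (G.induce U).Reachable u v := by
    simpa [connected_iff, Preconnected] using hconn
  set K₁ := (G.induce U).connectedComponentMk u
  set K₂ := (G.induce U).connectedComponentMk v
  have hdisj : Disjoint (Subtype.val '' K₁.supp ∩ S) (Subtype.val '' K₂.supp ∩ S) :=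
    ((Set.disjoint_image_iff Subtype.val_injective).mpr
      (pairwise_disjoint_supp_connectedComponent _ (ConnectedComponent.eq.not.mpr huv))).mono
      Set.inter_subset_left Set.inter_subset_left
  have hsum := Set.ncard_union_eq hdisj (hS.subset Set.inter_subset_right)
    (hS.subset Set.inter_subset_right)
  have hle : (Subtype.val '' K₁.supp ∩ S ∪ Subtype.val '' K₂.supp ∩ S).ncard ≤ S.ncard :=
    Set.ncard_le_ncard (Set.union_subset Set.inter_subset_right Set.inter_subset_right) hS
  by_cases h : (Subtype.val '' K₁.supp ∩ S).ncard ≤ (Subtype.val '' K₂.supp ∩ S).ncard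
  · exact ⟨K₁, by omega⟩
  · exact ⟨K₂, by omega⟩

theorem adj_of_forall_adj_eq {B : Set V} (hB : (G.induce B).Connected) {c x : V}
    (hc : c ∈ B) (hx : x ∈ B) (hcx : c ≠ x) (h : ∀ w ∈ B, G.Adj c w → w = x) : G.Adj c x := by
  have : Nontrivial B := ⟨⟨c, hc⟩, ⟨x, hx⟩, fun h => hcx (congrArg Subtype.val h)⟩
  obtain ⟨w, hw⟩ := hB.preconnected.exists_adj_of_nontrivial ⟨c, hc⟩
  have hw' : G.Adj c w := hw
  rwa [h w w.2 hw'] at hw'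

end SimpleGraph

theorem stmt12_general {V : Type*} (G : SimpleGraph V)
    (h3conn : ∀ A' B' : Set V, IsSeparation G A' B' → 3 ≤ (A' ∩ B').ncard)
    (A B : Set V) (hsep : IsSeparation G A B) (horder : (A ∩ B).ncard = 3)
    (x : V) (hx : x ∈ B) (hBconn : (G.induce B).Connected)
    (hcut : ¬ (G.induce (B \ {x})).Connected) :
    ∃ c ∈ A ∩ B, G.Adj c x ∧ ∀ w ∈ B, G.Adj c w → w = x := by
  have hfin : (A ∩ B).Finite := Set.finite_of_ncard_ne_zero (by omega)
  have hBx : (B \ {x}).Nonempty := by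
    obtain ⟨a, b, ha, hb, hab⟩ := (Set.one_lt_ncard_iff hfin).mp (by omega)
    by_cases hax : a = x
    · exact ⟨b, hb.2, fun h => hab (hax.trans h.symm)⟩
    · exact ⟨a, ha.2, hax⟩
  obtain ⟨K, hK⟩ := exists_connectedComponent_induce_two_mul_ncard_inter_le hBx hcut hfin
  set C := Subtype.val '' K.supp
  have hCB : C ⊆ B \ {x} := Set.image_val_subset
  have hCcl : ∀ a ∈ C, ∀ b ∈ B \ {x}, G.Adj a b → b ∈ C :=
    fun _ ha _ hb hab => K.mem_image_val_supp_of_adj ha hb hab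
  have hCAB : C ⊆ A ∩ B := by
    have hCinter : C ∩ (A ∩ B) = C ∩ A := by
      rw [← Set.inter_assoc, Set.inter_right_comm, Set.inter_eq_left.mpr
        (hCB.trans Set.sdiff_subset)]
    refine Set.subset_inter ?_ (hCB.trans Set.sdiff_subset)
    exact hsep.subset_of_ncard_inter_add_one_lt h3conn hx hCB hCcl (by rw [← hCinter]; omega)
  obtain ⟨c, hc⟩ : ∃ c, C = {c} := by
    have hC1 : C.ncard ≤ 1 := by
      rw [← Set.inter_eq_left.mpr hCAB]; omega
    rcases (Set.ncard_le_one_iff_eq (hfin.subset hCAB)).mp hC1 with hC0 | hC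
    · exact absurd hC0 ((K.nonempty_supp.image _).ne_empty)
    · exact hC
  have hcC : c ∈ C := hc ▸ rfl
  have hnbr : ∀ w ∈ B, G.Adj c w → w = x := by
    intro w hw hcw
    by_contra hwx
    have hwc : w = c := by simpa [hc] using hCcl c hcC w ⟨hw, hwx⟩ hcw
    exact G.loopless.irrefl c (hwc ▸ hcw)
  exact ⟨c, hCAB hcC, adj_of_forall_adj_eq hBconn (hCB hcC).1 hx (hCB hcC).2 hnbr, hnbr⟩

/-- In a 3-connected graph with a separation `(A,B)` of order 3, if `x` is a
cut-vertex of `G[B]`, then some `c ∈ A ∩ B` has `x` as its unique neighbor in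
`G[B]`. -/
theorem stmt12 {V : Type*} [Fintype V] (G : SimpleGraph V)
    (hcard : 3 < Fintype.card V)
    (h3conn : ∀ A' B' : Set V, IsSeparation G A' B' → 3 ≤ (A' ∩ B').ncard)
    (A B : Set V) (hsep : IsSeparation G A B) (horder : (A ∩ B).ncard = 3)
    (x : V) (hx : x ∈ B) (hBconn : (G.induce B).Connected)
    (hcut : ¬ (G.induce (B \ {x})).Connected) :
    ∃ c ∈ A ∩ B, G.Adj c x ∧ ∀ w ∈ B, G.Adj c w → w = x :=
  stmt12_general G h3conn A B hsep horder x hx hBconn hcut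
end

section
/- Let H be a finite simple 2-connected graph, let c_1, c_2, c_3 be distinct vertices of H, let s_4 be a vertex with s_4 ∉ {c_1, c_2, c_3}, and let x, y be two vertices such that H − {x, y} has exactly three connected components C_1, C_2, C_3 with c_i ∈ C_i for i = 1, 2, 3. Then there exist pairwise disjoint sets B_1, B_2, B_3, B_4 ⊆ V(H) with c_i ∈ B_i for i = 1,2,3 and s_4 ∈ B_4, such that each induced subgraph H[B_i] is connected, and such that for every pair of distinct indices i, j with {i, j} ≠ {2, 3}, the sets B_i and B_j are adjacent in H (i.e. some edge of H has one endpoint in B_i and one in B_j). -/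
open SimpleGraph

/-!
Since `H` has no cut vertex, each of `x`, `y` has a neighbour in every `Cᵢ`. If `s₄ = x`, the
branch sets `C₁ ∪ {y}, C₂, C₃, {x}` work. Otherwise `s₄` lies in a component `Cᵢ`, together with
`cᵢ`, and the heart of the proof is to split `Cᵢ ∪ {x, y}` into two connected parts separating
`x` from `y` and `cᵢ` from `s₄`. Start from the split `{x} | Cᵢ ∪ {y}` and keep moving to the
`x`-side a vertex `v ≠ y` of the `y`-side adjacent to the `x`-side such that the `y`-side stays
connected: taking `v` farthest from `y` makes this possible, and since the `y`-side shrinks, at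
some moment `cᵢ` and `s₄` end up on different sides. For `i = 1` the two parts serve as `B₁`
and `B₄`; for `i = 2` the part containing `s₄` is `B₄`, the component of `c₂` in the other part
minus `x` is `B₂`, and `B₁ = C₁ ∪ {x}`.
-/

namespace SimpleGraph

variable {V : Type*} {H : SimpleGraph V} {S T K : Set V} {a b c u v z : V}

/-- Reachability inside `H[S]`, phrased with walks of `H` so that no subtypes appear. -/
def ReachIn (H : SimpleGraph V) (S : Set V) (a b : V) : Prop :=
  ∃ w : H.Walk a b, ∀ v ∈ w.support, v ∈ S

def PreconnectedIn (H : SimpleGraph V) (S : Set V) : Prop :=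
  ∀ a ∈ S, ∀ b ∈ S, H.ReachIn S a b

def reachSet (H : SimpleGraph V) (S : Set V) (a : V) : Set V :=
  {v | H.ReachIn S a v}

namespace ReachIn

lemma refl (ha : a ∈ S) : H.ReachIn S a a := ⟨.nil, by simpa using ha⟩

lemma mem_right : H.ReachIn S a b → b ∈ S
  | ⟨w, hw⟩ => hw b w.end_mem_support

lemma symm : H.ReachIn S a b → H.ReachIn S b a
  | ⟨w, hw⟩ => ⟨w.reverse, fun v hv => hw v (by simpa using hv)⟩

lemma trans : H.ReachIn S a b → H.ReachIn S b c → H.ReachIn S a c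
  | ⟨w₁, hw₁⟩, ⟨w₂, hw₂⟩ => ⟨w₁.append w₂, fun v hv => by
      rcases (Walk.mem_support_append_iff w₁ w₂).mp hv with h | h
      exacts [hw₁ v h, hw₂ v h]⟩

lemma mono (hST : S ⊆ T) : H.ReachIn S a b → H.ReachIn T a b
  | ⟨w, hw⟩ => ⟨w, fun v hv => hST (hw v hv)⟩

lemma exists_adj_exit : H.ReachIn S a b → a ∈ K → b ∉ K →
    ∃ u ∈ S ∩ K, ∃ v ∈ S \ K, H.Adj u v
  | ⟨w, hw⟩, ha, hb => by
    obtain ⟨d, hd, hdK, hdK'⟩ := w.exists_boundary_dart K ha hb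
    exact ⟨d.fst, ⟨hw _ (w.dart_fst_mem_support_of_mem_darts hd), hdK⟩,
      d.snd, ⟨hw _ (w.dart_snd_mem_support_of_mem_darts hd), hdK'⟩, d.adj⟩

end ReachIn

lemma Adj.reachIn (hab : H.Adj a b) (ha : a ∈ S) (hb : b ∈ S) : H.ReachIn S a b :=
  ⟨.cons hab .nil, by simp [ha, hb]⟩

lemma preconnectedIn_singleton (a : V) : H.PreconnectedIn {a} := by
  rintro _ rfl _ rfl
  exact .refl rfl

lemma PreconnectedIn.insert_of_adj (hS : H.PreconnectedIn S) (hd : c ∈ S) (hzc : H.Adj z c) :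
    H.PreconnectedIn (insert z S) := by
  have hz : ∀ a ∈ insert z S, H.ReachIn (insert z S) a z := by
    rintro a (rfl | ha)
    · exact .refl (Set.mem_insert a S)
    · exact ((hS a ha c hd).mono (Set.subset_insert z S)).trans
        (hzc.symm.reachIn (Set.mem_insert_of_mem z hd) (Set.mem_insert z S))
  exact fun a ha b hb => (hz a ha).trans (hz b hb).symm

lemma preconnected_induce_iff_preconnectedIn :
    (H.induce S).Preconnected ↔ H.PreconnectedIn S := by
  refine ⟨fun h a ha b hb => ?_, fun h ⟨a, ha⟩ ⟨b, hb⟩ => ?_⟩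
  · obtain ⟨w⟩ := h ⟨a, ha⟩ ⟨b, hb⟩
    refine ⟨w.map (Embedding.induce S).toHom, fun v hv => ?_⟩
    obtain ⟨v', -, rfl⟩ := List.mem_map.mp ((Walk.support_map _ _) ▸ hv)
    exact v'.2
  · obtain ⟨w, hw⟩ := h a ha b hb
    exact ⟨w.induce S hw⟩

lemma connected_induce_iff_preconnectedIn :
    (H.induce S).Connected ↔ S.Nonempty ∧ H.PreconnectedIn S := by
  rw [connected_iff, preconnected_induce_iff_preconnectedIn, Set.nonempty_coe_sort, and_comm]

lemma PreconnectedIn.induce_connected (h : H.PreconnectedIn S) (ha : a ∈ S) :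
    (H.induce S).Connected :=
  connected_induce_iff_preconnectedIn.mpr ⟨⟨a, ha⟩, h⟩

lemma mem_reachSet_self (ha : a ∈ S) : a ∈ H.reachSet S a := .refl ha

lemma reachSet_subset : H.reachSet S a ⊆ S := fun _ h => ReachIn.mem_right h

lemma reachSet_mem_of_adj (hu : u ∈ H.reachSet S a) (hv : v ∈ S) (huv : H.Adj u v) :
    v ∈ H.reachSet S a :=
  ReachIn.trans hu (huv.reachIn (reachSet_subset hu) hv)

lemma preconnectedIn_reachSet : H.PreconnectedIn (H.reachSet S a) := by
  classical
  have hc : ∀ b ∈ H.reachSet S a, H.ReachIn (H.reachSet S a) a b := fun b ⟨w, hw⟩ =>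
    ⟨w, fun v hv => ⟨w.takeUntil v hv, fun t ht => hw t (w.support_takeUntil_subset_support hv ht)⟩⟩
  exact fun b hb c hc' => (hc b hb).symm.trans (hc c hc')

/-- The distance from `a` to `b` in `H[S]` (junk value `0` if no walk inside `S` joins them). -/
noncomputable def distIn (H : SimpleGraph V) (S : Set V) (a b : V) : ℕ :=
  sInf {n | ∃ w : H.Walk a b, w.length = n ∧ ∀ v ∈ w.support, v ∈ S}

lemma distIn_le (w : H.Walk a b) (hw : ∀ v ∈ w.support, v ∈ S) : H.distIn S a b ≤ w.length :=
  Nat.sInf_le ⟨w, rfl, hw⟩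

lemma ReachIn.exists_walk_length_eq_distIn (h : H.ReachIn S a b) :
    ∃ w : H.Walk a b, w.length = H.distIn S a b ∧ ∀ v ∈ w.support, v ∈ S := by
  obtain ⟨w, hw⟩ := h
  exact Nat.sInf_mem (s := {n | ∃ w : H.Walk a b, w.length = n ∧ ∀ v ∈ w.support, v ∈ S})
    ⟨w.length, w, rfl, hw⟩

lemma ReachIn.distIn_lt (h : H.ReachIn S a b) (hv : ¬ H.ReachIn (S \ {v}) a b) (hvb : v ≠ b) :
    H.distIn S a v < H.distIn S a b := by
  classical
  obtain ⟨w, hlen, hw⟩ := h.exists_walk_length_eq_distIn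
  have hvw : v ∈ w.support := by
    by_contra hvw
    exact hv ⟨w, fun t ht => ⟨hw t ht, fun htv => hvw (htv ▸ ht)⟩⟩
  calc H.distIn S a v
      ≤ (w.takeUntil v hvw).length :=
        distIn_le _ fun t ht => hw t (w.support_takeUntil_subset_support hvw ht)
    _ < w.length := Walk.length_takeUntil_lt_length hvw hvb
    _ = H.distIn S a b := hlen

def NoCutVertex (H : SimpleGraph V) : Prop :=
  ∀ v a b, a ≠ v → b ≠ v → H.ReachIn {v}ᶜ a b

lemma noCutVertex_of_forall_connected (h : ∀ v, (H.induce ({v}ᶜ : Set V)).Connected) :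
    H.NoCutVertex :=
  fun v a b ha hb => (connected_induce_iff_preconnectedIn.mp (h v)).2 a ha b hb

structure IsSplit (H : SimpleGraph V) (D : Set V) (x y : V) (A B : Set V) : Prop where
  union_eq : A ∪ B = insert x (insert y D)
  disjoint : Disjoint A B
  preconnectedIn_left : H.PreconnectedIn A
  preconnectedIn_right : H.PreconnectedIn B
  left_mem : x ∈ A
  right_mem : y ∈ B

namespace IsSplit

variable {D A B : Set V} {x y w k s : V}

lemma swap (hs : H.IsSplit D x y A B) : H.IsSplit D y x B A where
  union_eq := by rw [Set.union_comm, hs.union_eq, Set.insert_comm]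
  disjoint := hs.disjoint.symm
  preconnectedIn_left := hs.preconnectedIn_right
  preconnectedIn_right := hs.preconnectedIn_left
  left_mem := hs.right_mem
  right_mem := hs.left_mem

lemma move (hs : H.IsSplit D x y A B) (hvB : v ∈ B) (hvy : v ≠ y) (ha : a ∈ A) (hva : H.Adj v a)
    (hB : H.PreconnectedIn (B \ {v})) : H.IsSplit D x y (insert v A) (B \ {v}) where
  union_eq := by
    rw [← hs.union_eq]
    ext t
    by_cases htv : t = v <;> simp [htv, hvB]
  disjoint :=
    Set.disjoint_insert_left.mpr ⟨fun h => h.2 rfl, hs.disjoint.mono_right Set.sdiff_subset⟩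
  preconnectedIn_left := hs.preconnectedIn_left.insert_of_adj ha hva
  preconnectedIn_right := hB
  left_mem := Set.mem_insert_of_mem v hs.left_mem
  right_mem := ⟨hs.right_mem, Ne.symm hvy⟩

lemma left_subset (hs : H.IsSplit D x y A B) : A ⊆ insert x (insert y D) :=
  hs.union_eq ▸ Set.subset_union_left

lemma right_subset (hs : H.IsSplit D x y A B) : B ⊆ insert x (insert y D) :=
  hs.union_eq ▸ Set.subset_union_right

lemma exists_subset_left_adj (hs : H.IsSplit D x y A B) (hD : H.PreconnectedIn D) (hxD : x ∉ D)
    (hcA : c ∈ A) (hcD : c ∈ D) (hsB : s ∈ B) (hsD : s ∈ D) :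
    ∃ A₀ ⊆ A \ {x}, c ∈ A₀ ∧ H.PreconnectedIn A₀ ∧ (∃ p ∈ A₀, H.Adj p x) ∧
      SetsAdjacent H A₀ B := by
  have hc : c ∈ A \ {x} := ⟨hcA, fun h => hxD (h ▸ hcD)⟩
  refine ⟨_, reachSet_subset, mem_reachSet_self hc, preconnectedIn_reachSet, ?_, ?_⟩
  · obtain ⟨u, ⟨-, hu⟩, v, ⟨hvA, hv⟩, huv⟩ :=
      (hs.preconnectedIn_left c hcA x hs.left_mem).exists_adj_exit (mem_reachSet_self hc)
        fun h => (reachSet_subset h).2 rfl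
    obtain rfl : v = x := by
      by_contra hvx
      exact hv (reachSet_mem_of_adj hu ⟨hvA, hvx⟩ huv)
    exact ⟨u, hu, huv⟩
  · obtain ⟨u, ⟨-, hu⟩, v, ⟨hvD, hv⟩, huv⟩ := (hD c hcD s hsD).exists_adj_exit
      (mem_reachSet_self hc) fun h => Set.disjoint_left.mp hs.disjoint (reachSet_subset h).1 hsB
    have hvAB : v ∈ A ∪ B := hs.union_eq ▸ Set.mem_insert_of_mem x (Set.mem_insert_of_mem y hvD)
    exact ⟨u, hu, v, hvAB.resolve_left fun hvA =>
      hv (reachSet_mem_of_adj hu ⟨hvA, fun h => hxD (h ▸ hvD)⟩ huv), huv⟩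

variable (hH : H.NoCutVertex) (hD : ∀ u ∈ D, ∀ v, H.Adj u v → v ∈ insert x (insert y D))
include hH hD

lemma exists_adj_left_of_closed (hs : H.IsSplit D x y A B) (hw : w ∈ B) {K : Set V}
    (hKB : K ⊆ B \ {w}) (hyK : y ∉ K) (hKcl : ∀ p ∈ K, ∀ q ∈ B \ {w}, H.Adj p q → q ∈ K)
    (hk : k ∈ K) : ∃ u ∈ K, ∃ a ∈ A, H.Adj u a := by
  have hxB : x ∉ B := Set.disjoint_left.mp hs.disjoint hs.left_mem
  have hxw : x ≠ w := by rintro rfl; exact hxB hw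
  obtain ⟨u, ⟨-, huK⟩, v, ⟨hvw, hvK⟩, huv⟩ :=
    (hH w k x (hKB hk).2 hxw).exists_adj_exit hk fun hxK => hxB (hKB hxK).1
  have huD : u ∈ D := by
    have huAB : u ∈ A ∪ B := Or.inr (hKB huK).1
    rw [hs.union_eq] at huAB
    rcases huAB with rfl | rfl | h
    exacts [absurd (hKB huK).1 hxB, absurd huK hyK, h]
  have hvAB : v ∈ A ∪ B := hs.union_eq ▸ hD u huD v huv
  exact ⟨u, huK, v, hvAB.resolve_right fun hvB => hvK (hKcl u huK v ⟨hvB, hvw⟩ huv), huv⟩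

lemma exists_movable [Finite V] (hs : H.IsSplit D x y A B) (hb : b ∈ B) (hby : b ≠ y) :
    ∃ v ∈ B, v ≠ y ∧ (∃ a ∈ A, H.Adj v a) ∧ H.PreconnectedIn (B \ {v}) := by
  set N := {v | v ∈ B ∧ v ≠ y ∧ ∃ a ∈ A, H.Adj v a}
  have hN : N.Nonempty := by
    obtain ⟨u, hu, hA⟩ := hs.exists_adj_left_of_closed hH hD hs.right_mem subset_rfl
      (fun h => h.2 rfl) (fun _ _ _ hq _ => hq) ⟨hb, hby⟩
    exact ⟨u, hu.1, hu.2, hA⟩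
  -- A vertex of `N` farthest from `y` inside `B` cannot separate `B`: a far side of it
  -- would contain a vertex of `N` that is even farther from `y`.
  obtain ⟨v, ⟨hvB, hvy, hvA⟩, hmax⟩ := N.exists_max_image (H.distIn B y) N.toFinite hN
  refine ⟨v, hvB, hvy, hvA, ?_⟩
  by_contra hdis
  have hyB : y ∈ B \ {v} := ⟨hs.right_mem, Ne.symm hvy⟩
  obtain ⟨u, hu, hyu⟩ : ∃ u ∈ B \ {v}, ¬ H.ReachIn (B \ {v}) y u := by
    by_contra! h
    exact hdis fun p hp q hq => (h p hp).symm.trans (h q hq)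
  obtain ⟨u', hu'K, hu'A⟩ := hs.exists_adj_left_of_closed hH hD hvB reachSet_subset
    (fun hy => hyu (ReachIn.symm hy)) (fun _ hp _ hq hpq => reachSet_mem_of_adj hp hq hpq)
    (mem_reachSet_self hu)
  have hu'B : u' ∈ B \ {v} := reachSet_subset hu'K
  have hyu' : ¬ H.ReachIn (B \ {v}) y u' := fun h => hyu (h.trans (ReachIn.symm hu'K))
  have hle := hmax u' ⟨hu'B.1, fun h => hyu' (by rw [h]; exact .refl hyB), hu'A⟩
  have hlt := (hs.preconnectedIn_right y hs.right_mem u' hu'B.1).distIn_lt hyu'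
    fun h => hu'B.2 h.symm
  omega

lemma exists_separating [Finite V] (hs : H.IsSplit D x y A B) (hcB : c ∈ B) (hcy : c ≠ y)
    (hsD : s ∈ D) (hcs : c ≠ s) :
    ∃ A' B', H.IsSplit D x y A' B' ∧ (c ∈ A' ∧ s ∈ B' ∨ s ∈ A' ∧ c ∈ B') := by
  induction hn : B.ncard using Nat.strong_induction_on generalizing A B with
  | _ n ih =>
  rcases hs.union_eq ▸ Set.mem_insert_of_mem x (Set.mem_insert_of_mem y hsD) with hsA | hsB
  · exact ⟨A, B, hs, .inr ⟨hsA, hcB⟩⟩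
  obtain ⟨v, hvB, hvy, ⟨a, ha, hva⟩, hBv⟩ := hs.exists_movable hH hD hcB hcy
  have hs' := hs.move hvB hvy ha hva hBv
  by_cases hcv : c = v
  · exact ⟨_, _, hs', .inl ⟨hcv ▸ Set.mem_insert c A, hsB, fun h => hcs (hcv.trans h.symm)⟩⟩
  · exact ih _ (hn ▸ Set.ncard_sdiff_singleton_lt_of_mem hvB B.toFinite) hs' ⟨hcB, hcv⟩ rfl

end IsSplit


/-- `D` is a component of `H - {x, y}` adjacent to both `x` and `y`. -/
structure IsFlap (H : SimpleGraph V) (x y : V) (D : Set V) : Prop where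
  left_not_mem : x ∉ D
  right_not_mem : y ∉ D
  preconnectedIn : H.PreconnectedIn D
  adj_mem : ∀ u ∈ D, ∀ v, H.Adj u v → v ∈ insert x (insert y D)
  exists_adj_left : ∃ d ∈ D, H.Adj x d
  exists_adj_right : ∃ d ∈ D, H.Adj y d

section Flap

variable {D C : Set V} {x y s : V}

lemma exists_adj_of_noCutVertex (hH : H.NoCutVertex)
    (hD : ∀ u ∈ D, ∀ v, H.Adj u v → v ∈ insert x (insert y D)) (hyD : y ∉ D)
    (hc : c ∈ D) (hb : b ∉ D) (hby : b ≠ y) : ∃ d ∈ D, H.Adj x d := by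
  obtain ⟨u, ⟨-, huD⟩, v, ⟨hvy, hvD⟩, huv⟩ :=
    (hH y c b (fun h => hyD (h ▸ hc)) hby).exists_adj_exit hc hb
  rcases hD u huD v huv with rfl | rfl | h
  exacts [⟨u, huD, huv.symm⟩, absurd rfl hvy, absurd h hvD]

lemma isFlap_of_noCutVertex (hH : H.NoCutVertex) (hxD : x ∉ D) (hyD : y ∉ D)
    (hD : H.PreconnectedIn D) (hcl : ∀ u ∈ D, ∀ v, H.Adj u v → v ∈ insert x (insert y D))
    (hc : c ∈ D) (hb : b ∉ D) (hbx : b ≠ x) (hby : b ≠ y) : H.IsFlap x y D where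
  left_not_mem := hxD
  right_not_mem := hyD
  preconnectedIn := hD
  adj_mem := hcl
  exists_adj_left := exists_adj_of_noCutVertex hH hcl hyD hc hb hby
  exists_adj_right :=
    exists_adj_of_noCutVertex hH (Set.insert_comm x y D ▸ hcl) hxD hc hb hbx

namespace IsFlap

lemma symm (hF : H.IsFlap x y D) : H.IsFlap y x D where
  left_not_mem := hF.right_not_mem
  right_not_mem := hF.left_not_mem
  preconnectedIn := hF.preconnectedIn
  adj_mem := Set.insert_comm x y D ▸ hF.adj_mem
  exists_adj_left := hF.exists_adj_right
  exists_adj_right := hF.exists_adj_left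

lemma disjoint_insert_insert (hF : H.IsFlap x y D) (h : Disjoint C D) :
    Disjoint (insert x (insert y C)) D := by
  simp [Set.disjoint_insert_left, hF.left_not_mem, hF.right_not_mem, h]

lemma exists_isSplit_separating [Finite V] (hH : H.NoCutVertex) (hF : H.IsFlap x y D)
    (hxy : x ≠ y) (hc : c ∈ D) (hs : s ∈ D) (hcs : c ≠ s) :
    ∃ A B, H.IsSplit D x y A B ∧ (c ∈ A ∧ s ∈ B ∨ s ∈ A ∧ c ∈ B) := by
  obtain ⟨d, hd, hyd⟩ := hF.exists_adj_right
  have h₀ : H.IsSplit D x y {x} (insert y D) :=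
    { union_eq := Set.singleton_union
      disjoint := Set.disjoint_singleton_left.mpr (by simp [hxy, hF.left_not_mem])
      preconnectedIn_left := preconnectedIn_singleton x
      preconnectedIn_right := hF.preconnectedIn.insert_of_adj hd hyd
      left_mem := rfl
      right_mem := Set.mem_insert y D }
  exact h₀.exists_separating hH hF.adj_mem (Set.mem_insert_of_mem y hc)
    (fun h => hF.right_not_mem (h ▸ hc)) hs hcs

end IsFlap

end Flap

structure ThreeFlaps (H : SimpleGraph V) (x y : V) (C₁ C₂ C₃ : Set V) : Prop where
  ne : x ≠ y
  flap₁ : H.IsFlap x y C₁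
  flap₂ : H.IsFlap x y C₂
  flap₃ : H.IsFlap x y C₃
  disjoint₁₂ : Disjoint C₁ C₂
  disjoint₁₃ : Disjoint C₁ C₃
  disjoint₂₃ : Disjoint C₂ C₃

def HasBranchSets (H : SimpleGraph V) (c₁ c₂ c₃ s₄ : V) : Prop :=
  ∃ B₁ B₂ B₃ B₄ : Set V,
    c₁ ∈ B₁ ∧ c₂ ∈ B₂ ∧ c₃ ∈ B₃ ∧ s₄ ∈ B₄ ∧
    Disjoint B₁ B₂ ∧ Disjoint B₁ B₃ ∧ Disjoint B₁ B₄ ∧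
    Disjoint B₂ B₃ ∧ Disjoint B₂ B₄ ∧ Disjoint B₃ B₄ ∧
    (H.induce B₁).Connected ∧ (H.induce B₂).Connected ∧
    (H.induce B₃).Connected ∧ (H.induce B₄).Connected ∧
    SetsAdjacent H B₁ B₂ ∧ SetsAdjacent H B₁ B₃ ∧ SetsAdjacent H B₁ B₄ ∧
    SetsAdjacent H B₂ B₄ ∧ SetsAdjacent H B₃ B₄

lemma HasBranchSets.swap₂₃ {c₁ c₂ c₃ s₄ : V} (h : H.HasBranchSets c₁ c₂ c₃ s₄) :
    H.HasBranchSets c₁ c₃ c₂ s₄ := by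
  obtain ⟨B₁, B₂, B₃, B₄, h₁, h₂, h₃, h₄, d₁₂, d₁₃, d₁₄, d₂₃, d₂₄, d₃₄, k₁, k₂, k₃, k₄,
    a₁₂, a₁₃, a₁₄, a₂₄, a₃₄⟩ := h
  exact ⟨B₁, B₃, B₂, B₄, h₁, h₃, h₂, h₄, d₁₃, d₁₂, d₁₄, d₂₃.symm, d₃₄, d₂₄, k₁, k₃, k₂, k₄,
    a₁₃, a₁₂, a₁₄, a₃₄, a₂₄⟩

namespace ThreeFlaps

variable {C₁ C₂ C₃ A B : Set V} {x y c₁ c₂ c₃ s : V}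

lemma swap_xy (hF : H.ThreeFlaps x y C₁ C₂ C₃) : H.ThreeFlaps y x C₁ C₂ C₃ :=
  ⟨hF.ne.symm, hF.flap₁.symm, hF.flap₂.symm, hF.flap₃.symm, hF.disjoint₁₂, hF.disjoint₁₃,
    hF.disjoint₂₃⟩

lemma swap₂₃ (hF : H.ThreeFlaps x y C₁ C₂ C₃) : H.ThreeFlaps x y C₁ C₃ C₂ :=
  ⟨hF.ne, hF.flap₁, hF.flap₃, hF.flap₂, hF.disjoint₁₃, hF.disjoint₁₂, hF.disjoint₂₃.symm⟩

lemma hasBranchSets_left (hF : H.ThreeFlaps x y C₁ C₂ C₃) (hc₁ : c₁ ∈ C₁) (hc₂ : c₂ ∈ C₂)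
    (hc₃ : c₃ ∈ C₃) : H.HasBranchSets c₁ c₂ c₃ x := by
  obtain ⟨d₁, hd₁, hyd₁⟩ := hF.flap₁.exists_adj_right
  obtain ⟨d₂, hd₂, hyd₂⟩ := hF.flap₂.exists_adj_right
  obtain ⟨d₃, hd₃, hyd₃⟩ := hF.flap₃.exists_adj_right
  obtain ⟨e₁, he₁, hxe₁⟩ := hF.flap₁.exists_adj_left
  obtain ⟨e₂, he₂, hxe₂⟩ := hF.flap₂.exists_adj_left
  obtain ⟨e₃, he₃, hxe₃⟩ := hF.flap₃.exists_adj_left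
  refine ⟨insert y C₁, C₂, C₃, {x}, Set.mem_insert_of_mem y hc₁, hc₂, hc₃, rfl,
    Set.disjoint_insert_left.mpr ⟨hF.flap₂.right_not_mem, hF.disjoint₁₂⟩,
    Set.disjoint_insert_left.mpr ⟨hF.flap₃.right_not_mem, hF.disjoint₁₃⟩,
    Set.disjoint_singleton_right.mpr (by simp [hF.ne, hF.flap₁.left_not_mem]), hF.disjoint₂₃,
    Set.disjoint_singleton_right.mpr hF.flap₂.left_not_mem,
    Set.disjoint_singleton_right.mpr hF.flap₃.left_not_mem,
    (hF.flap₁.preconnectedIn.insert_of_adj hd₁ hyd₁).induce_connected (Set.mem_insert y C₁),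
    hF.flap₂.preconnectedIn.induce_connected hc₂, hF.flap₃.preconnectedIn.induce_connected hc₃,
    (preconnectedIn_singleton x).induce_connected rfl,
    ⟨y, Set.mem_insert y C₁, d₂, hd₂, hyd₂⟩, ⟨y, Set.mem_insert y C₁, d₃, hd₃, hyd₃⟩,
    ⟨e₁, Set.mem_insert_of_mem y he₁, x, rfl, hxe₁.symm⟩, ⟨e₂, he₂, x, rfl, hxe₂.symm⟩,
    ⟨e₃, he₃, x, rfl, hxe₃.symm⟩⟩

lemma hasBranchSets_of_isSplit₁ (hF : H.ThreeFlaps x y C₁ C₂ C₃) (hs : H.IsSplit C₁ x y A B)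
    (hcA : c₁ ∈ A) (hsB : s ∈ B) (hc₁ : c₁ ∈ C₁) (hs₁ : s ∈ C₁) (hc₂ : c₂ ∈ C₂)
    (hc₃ : c₃ ∈ C₃) : H.HasBranchSets c₁ c₂ c₃ s := by
  obtain ⟨u, ⟨-, huA⟩, v, ⟨hv₁, hvA⟩, huv⟩ := (hF.flap₁.preconnectedIn c₁ hc₁ s hs₁).exists_adj_exit
    hcA fun hsA => Set.disjoint_left.mp hs.disjoint hsA hsB
  have hvB : v ∈ B := ((hs.union_eq ▸ Set.mem_insert_of_mem x (Set.mem_insert_of_mem y hv₁) :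
    v ∈ A ∪ B)).resolve_left hvA
  obtain ⟨d₂, hd₂, hxd₂⟩ := hF.flap₂.exists_adj_left
  obtain ⟨d₃, hd₃, hxd₃⟩ := hF.flap₃.exists_adj_left
  obtain ⟨e₂, he₂, hye₂⟩ := hF.flap₂.exists_adj_right
  obtain ⟨e₃, he₃, hye₃⟩ := hF.flap₃.exists_adj_right
  have h₂ := hF.flap₂.disjoint_insert_insert hF.disjoint₁₂
  have h₃ := hF.flap₃.disjoint_insert_insert hF.disjoint₁₃
  exact ⟨A, C₂, C₃, B, hcA, hc₂, hc₃, hsB, h₂.mono_left hs.left_subset,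
    h₃.mono_left hs.left_subset, hs.disjoint, hF.disjoint₂₃, (h₂.mono_left hs.right_subset).symm,
    (h₃.mono_left hs.right_subset).symm, hs.preconnectedIn_left.induce_connected hcA,
    hF.flap₂.preconnectedIn.induce_connected hc₂, hF.flap₃.preconnectedIn.induce_connected hc₃,
    hs.preconnectedIn_right.induce_connected hsB, ⟨x, hs.left_mem, d₂, hd₂, hxd₂⟩,
    ⟨x, hs.left_mem, d₃, hd₃, hxd₃⟩, ⟨u, huA, v, hvB, huv⟩,
    ⟨e₂, he₂, y, hs.right_mem, hye₂.symm⟩, ⟨e₃, he₃, y, hs.right_mem, hye₃.symm⟩⟩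

lemma hasBranchSets_of_isSplit₂ (hF : H.ThreeFlaps x y C₁ C₂ C₃) (hs : H.IsSplit C₂ x y A B)
    (hcA : c₂ ∈ A) (hsB : s ∈ B) (hc₂ : c₂ ∈ C₂) (hs₂ : s ∈ C₂) (hc₁ : c₁ ∈ C₁)
    (hc₃ : c₃ ∈ C₃) : H.HasBranchSets c₁ c₂ c₃ s := by
  obtain ⟨A₀, hA₀, hcA₀, hA₀c, ⟨p, hp, hpx⟩, hA₀B⟩ :=
    hs.exists_subset_left_adj hF.flap₂.preconnectedIn hF.flap₂.left_not_mem hcA hc₂ hsB hs₂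
  have hA₀A : A₀ ⊆ A := hA₀.trans Set.sdiff_subset
  obtain ⟨d₁, hd₁, hxd₁⟩ := hF.flap₁.exists_adj_left
  obtain ⟨d₃, hd₃, hxd₃⟩ := hF.flap₃.exists_adj_left
  obtain ⟨e₁, he₁, hye₁⟩ := hF.flap₁.exists_adj_right
  obtain ⟨e₃, he₃, hye₃⟩ := hF.flap₃.exists_adj_right
  have h₁ := hF.flap₁.disjoint_insert_insert hF.disjoint₁₂.symm
  have h₃ := hF.flap₃.disjoint_insert_insert hF.disjoint₂₃
  have hxB : x ∉ B := Set.disjoint_left.mp hs.disjoint hs.left_mem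
  exact ⟨insert x C₁, A₀, C₃, B, Set.mem_insert_of_mem x hc₁, hcA₀, hc₃, hsB,
    Set.disjoint_insert_left.mpr
      ⟨fun h => (hA₀ h).2 rfl, (h₁.mono_left (hA₀A.trans hs.left_subset)).symm⟩,
    Set.disjoint_insert_left.mpr ⟨hF.flap₃.left_not_mem, hF.disjoint₁₃⟩,
    Set.disjoint_insert_left.mpr ⟨hxB, (h₁.mono_left hs.right_subset).symm⟩,
    h₃.mono_left (hA₀A.trans hs.left_subset), hs.disjoint.mono_left hA₀A,
    (h₃.mono_left hs.right_subset).symm,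
    (hF.flap₁.preconnectedIn.insert_of_adj hd₁ hxd₁).induce_connected (Set.mem_insert x C₁),
    hA₀c.induce_connected hcA₀, hF.flap₃.preconnectedIn.induce_connected hc₃,
    hs.preconnectedIn_right.induce_connected hsB, ⟨x, Set.mem_insert x C₁, p, hp, hpx.symm⟩,
    ⟨x, Set.mem_insert x C₁, d₃, hd₃, hxd₃⟩,
    ⟨e₁, Set.mem_insert_of_mem x he₁, y, hs.right_mem, hye₁.symm⟩, hA₀B,
    ⟨e₃, he₃, y, hs.right_mem, hye₃.symm⟩⟩

variable [Finite V] (hH : H.NoCutVertex)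
include hH

lemma hasBranchSets_of_mem₁ (hF : H.ThreeFlaps x y C₁ C₂ C₃) (hc₁ : c₁ ∈ C₁) (hc₂ : c₂ ∈ C₂)
    (hc₃ : c₃ ∈ C₃) (hs₁ : s ∈ C₁) (hcs : c₁ ≠ s) : H.HasBranchSets c₁ c₂ c₃ s := by
  obtain ⟨A, B, hAB, ⟨hcA, hsB⟩ | ⟨hsA, hcB⟩⟩ :=
    hF.flap₁.exists_isSplit_separating hH hF.ne hc₁ hs₁ hcs
  · exact hF.hasBranchSets_of_isSplit₁ hAB hcA hsB hc₁ hs₁ hc₂ hc₃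
  · exact hF.swap_xy.hasBranchSets_of_isSplit₁ hAB.swap hcB hsA hc₁ hs₁ hc₂ hc₃

lemma hasBranchSets_of_mem₂ (hF : H.ThreeFlaps x y C₁ C₂ C₃) (hc₁ : c₁ ∈ C₁) (hc₂ : c₂ ∈ C₂)
    (hc₃ : c₃ ∈ C₃) (hs₂ : s ∈ C₂) (hcs : c₂ ≠ s) : H.HasBranchSets c₁ c₂ c₃ s := by
  obtain ⟨A, B, hAB, ⟨hcA, hsB⟩ | ⟨hsA, hcB⟩⟩ :=
    hF.flap₂.exists_isSplit_separating hH hF.ne hc₂ hs₂ hcs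
  · exact hF.hasBranchSets_of_isSplit₂ hAB hcA hsB hc₂ hs₂ hc₁ hc₃
  · exact hF.swap_xy.hasBranchSets_of_isSplit₂ hAB.swap hcB hsA hc₂ hs₂ hc₁ hc₃

theorem hasBranchSets (hF : H.ThreeFlaps x y C₁ C₂ C₃) (hc₁ : c₁ ∈ C₁) (hc₂ : c₂ ∈ C₂)
    (hc₃ : c₃ ∈ C₃) (hs : s ∉ ({c₁, c₂, c₃} : Set V))
    (hsC : s = x ∨ s = y ∨ s ∈ C₁ ∨ s ∈ C₂ ∨ s ∈ C₃) : H.HasBranchSets c₁ c₂ c₃ s := by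
  simp only [Set.mem_insert_iff, Set.mem_singleton_iff, not_or] at hs
  rcases hsC with rfl | rfl | hs₁ | hs₂ | hs₃
  · exact hF.hasBranchSets_left hc₁ hc₂ hc₃
  · exact hF.swap_xy.hasBranchSets_left hc₁ hc₂ hc₃
  · exact hF.hasBranchSets_of_mem₁ hH hc₁ hc₂ hc₃ hs₁ (Ne.symm hs.1)
  · exact hF.hasBranchSets_of_mem₂ hH hc₁ hc₂ hc₃ hs₂ (Ne.symm hs.2.1)
  · exact (hF.swap₂₃.hasBranchSets_of_mem₂ hH hc₁ hc₃ hc₂ hs₃ (Ne.symm hs.2.2)).swap₂₃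

end ThreeFlaps

lemma threeFlaps_of_components {C₁ C₂ C₃ : Set V} {x y c₁ c₂ c₃ : V} (hH : H.NoCutVertex)
    (hxy : x ≠ y) (hcover : C₁ ∪ C₂ ∪ C₃ = ({x, y} : Set V)ᶜ)
    (hd12 : Disjoint C₁ C₂) (hd13 : Disjoint C₁ C₃) (hd23 : Disjoint C₂ C₃)
    (hconn₁ : (H.induce C₁).Connected) (hconn₂ : (H.induce C₂).Connected)
    (hconn₃ : (H.induce C₃).Connected)
    (hne12 : ∀ u ∈ C₁, ∀ v ∈ C₂, ¬ H.Adj u v) (hne13 : ∀ u ∈ C₁, ∀ v ∈ C₃, ¬ H.Adj u v)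
    (hne23 : ∀ u ∈ C₂, ∀ v ∈ C₃, ¬ H.Adj u v)
    (hc₁ : c₁ ∈ C₁) (hc₂ : c₂ ∈ C₂) (hc₃ : c₃ ∈ C₃) : H.ThreeFlaps x y C₁ C₂ C₃ := by
  have hmem : ∀ v, v ∈ C₁ ∪ C₂ ∪ C₃ ↔ v ≠ x ∧ v ≠ y := fun v => by rw [hcover]; simp
  have hcl : ∀ C : Set V, (∀ u ∈ C, ∀ v ∈ C₁ ∪ C₂ ∪ C₃, H.Adj u v → v ∈ C) →
      ∀ u ∈ C, ∀ v, H.Adj u v → v ∈ insert x (insert y C) := by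
    intro C h u hu v huv
    by_cases hv : v ∈ C₁ ∪ C₂ ∪ C₃
    · exact Set.mem_insert_of_mem x (Set.mem_insert_of_mem y (h u hu v hv huv))
    · rw [hmem, not_and_or, not_ne_iff, not_ne_iff] at hv
      rcases hv with rfl | rfl
      exacts [Set.mem_insert v _, Set.mem_insert_of_mem x (Set.mem_insert v C)]
  have h₁ (v) (hv : v ∈ C₁) := (hmem v).mp (.inl (.inl hv))
  have h₂ (v) (hv : v ∈ C₂) := (hmem v).mp (.inl (.inr hv))
  have h₃ (v) (hv : v ∈ C₃) := (hmem v).mp (.inr hv)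
  have hpre (C : Set V) (hC : (H.induce C).Connected) : H.PreconnectedIn C :=
    (connected_induce_iff_preconnectedIn.mp hC).2
  refine ⟨hxy, ?_, ?_, ?_, hd12, hd13, hd23⟩
  · refine isFlap_of_noCutVertex hH (fun h => (h₁ x h).1 rfl) (fun h => (h₁ y h).2 rfl)
      (hpre C₁ hconn₁) (hcl C₁ ?_) hc₁ (Set.disjoint_right.mp hd12 hc₂) (h₂ c₂ hc₂).1
      (h₂ c₂ hc₂).2
    rintro u hu v ((hv | hv) | hv) huv
    exacts [hv, absurd huv (hne12 u hu v hv), absurd huv (hne13 u hu v hv)]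
  · refine isFlap_of_noCutVertex hH (fun h => (h₂ x h).1 rfl) (fun h => (h₂ y h).2 rfl)
      (hpre C₂ hconn₂) (hcl C₂ ?_) hc₂ (Set.disjoint_left.mp hd12 hc₁) (h₁ c₁ hc₁).1
      (h₁ c₁ hc₁).2
    rintro u hu v ((hv | hv) | hv) huv
    exacts [absurd huv.symm (hne12 v hv u hu), hv, absurd huv (hne23 u hu v hv)]
  · refine isFlap_of_noCutVertex hH (fun h => (h₃ x h).1 rfl) (fun h => (h₃ y h).2 rfl)
      (hpre C₃ hconn₃) (hcl C₃ ?_) hc₃ (Set.disjoint_left.mp hd13 hc₁) (h₁ c₁ hc₁).1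
      (h₁ c₁ hc₁).2
    rintro u hu v ((hv | hv) | hv) huv
    exacts [absurd huv.symm (hne13 v hv u hu), absurd huv.symm (hne23 v hv u hu), hv]

end SimpleGraph

theorem stmt13_general {V : Type*} [Fintype V] (H : SimpleGraph V)
    (h2conn : ∀ s : Set V, s.ncard < 2 → (H.induce (sᶜ : Set V)).Connected)
    (c₁ c₂ c₃ s₄ x y : V)
    (hs₄ : s₄ ∉ ({c₁, c₂, c₃} : Set V)) (hxy : x ≠ y)
    (C₁ C₂ C₃ : Set V)
    (hcover : C₁ ∪ C₂ ∪ C₃ = (({x, y} : Set V)ᶜ : Set V))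
    (hd12 : Disjoint C₁ C₂) (hd13 : Disjoint C₁ C₃) (hd23 : Disjoint C₂ C₃)
    (hconn₁ : (H.induce C₁).Connected) (hconn₂ : (H.induce C₂).Connected)
    (hconn₃ : (H.induce C₃).Connected)
    (hne12 : ∀ u ∈ C₁, ∀ v ∈ C₂, ¬ H.Adj u v)
    (hne13 : ∀ u ∈ C₁, ∀ v ∈ C₃, ¬ H.Adj u v)
    (hne23 : ∀ u ∈ C₂, ∀ v ∈ C₃, ¬ H.Adj u v)
    (hc₁ : c₁ ∈ C₁) (hc₂ : c₂ ∈ C₂) (hc₃ : c₃ ∈ C₃) :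
    ∃ B₁ B₂ B₃ B₄ : Set V,
      c₁ ∈ B₁ ∧ c₂ ∈ B₂ ∧ c₃ ∈ B₃ ∧ s₄ ∈ B₄ ∧
      Disjoint B₁ B₂ ∧ Disjoint B₁ B₃ ∧ Disjoint B₁ B₄ ∧
      Disjoint B₂ B₃ ∧ Disjoint B₂ B₄ ∧ Disjoint B₃ B₄ ∧
      (H.induce B₁).Connected ∧ (H.induce B₂).Connected ∧
      (H.induce B₃).Connected ∧ (H.induce B₄).Connected ∧
      SetsAdjacent H B₁ B₂ ∧ SetsAdjacent H B₁ B₃ ∧ SetsAdjacent H B₁ B₄ ∧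
      SetsAdjacent H B₂ B₄ ∧ SetsAdjacent H B₃ B₄ := by
  have hH : H.NoCutVertex := noCutVertex_of_forall_connected fun v => h2conn {v} (by simp)
  have hF := threeFlaps_of_components hH hxy hcover hd12 hd13 hd23 hconn₁ hconn₂ hconn₃
    hne12 hne13 hne23 hc₁ hc₂ hc₃
  have hsC : s₄ = x ∨ s₄ = y ∨ s₄ ∈ C₁ ∨ s₄ ∈ C₂ ∨ s₄ ∈ C₃ := by
    by_cases hs : s₄ = x ∨ s₄ = y
    · tauto
    · have : s₄ ∈ C₁ ∪ C₂ ∪ C₃ := by rw [hcover]; simpa using hs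
      simp only [Set.mem_union] at this
      tauto
  exact hF.hasBranchSets hH hc₁ hc₂ hc₃ hs₄ hsC

/-- If `H` is 2-connected, `c₁, c₂, c₃` are distinct, `s₄ ∉ {c₁,c₂,c₃}`, and
`H − {x,y}` has exactly three components `C₁, C₂, C₃` with `cᵢ ∈ Cᵢ`, then there
are disjoint connected branch-sets `B₁, B₂, B₃, B₄` with `cᵢ ∈ Bᵢ`, `s₄ ∈ B₄`,
pairwise adjacent except possibly the pair `B₂, B₃`. -/
theorem stmt13 {V : Type*} [Fintype V] (H : SimpleGraph V)
    (hcard : 2 < Fintype.card V)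
    (h2conn : ∀ s : Set V, s.ncard < 2 → (H.induce (sᶜ : Set V)).Connected)
    (c₁ c₂ c₃ s₄ x y : V)
    (hc12 : c₁ ≠ c₂) (hc13 : c₁ ≠ c₃) (hc23 : c₂ ≠ c₃)
    (hs₄ : s₄ ∉ ({c₁, c₂, c₃} : Set V)) (hxy : x ≠ y)
    (C₁ C₂ C₃ : Set V)
    (hcover : C₁ ∪ C₂ ∪ C₃ = (({x, y} : Set V)ᶜ : Set V))
    (hd12 : Disjoint C₁ C₂) (hd13 : Disjoint C₁ C₃) (hd23 : Disjoint C₂ C₃)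
    (hconn₁ : (H.induce C₁).Connected) (hconn₂ : (H.induce C₂).Connected)
    (hconn₃ : (H.induce C₃).Connected)
    (hne12 : ∀ u ∈ C₁, ∀ v ∈ C₂, ¬ H.Adj u v)
    (hne13 : ∀ u ∈ C₁, ∀ v ∈ C₃, ¬ H.Adj u v)
    (hne23 : ∀ u ∈ C₂, ∀ v ∈ C₃, ¬ H.Adj u v)
    (hc₁ : c₁ ∈ C₁) (hc₂ : c₂ ∈ C₂) (hc₃ : c₃ ∈ C₃) :
    ∃ B₁ B₂ B₃ B₄ : Set V,
      c₁ ∈ B₁ ∧ c₂ ∈ B₂ ∧ c₃ ∈ B₃ ∧ s₄ ∈ B₄ ∧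
      Disjoint B₁ B₂ ∧ Disjoint B₁ B₃ ∧ Disjoint B₁ B₄ ∧
      Disjoint B₂ B₃ ∧ Disjoint B₂ B₄ ∧ Disjoint B₃ B₄ ∧
      (H.induce B₁).Connected ∧ (H.induce B₂).Connected ∧
      (H.induce B₃).Connected ∧ (H.induce B₄).Connected ∧
      SetsAdjacent H B₁ B₂ ∧ SetsAdjacent H B₁ B₃ ∧ SetsAdjacent H B₁ B₄ ∧
      SetsAdjacent H B₂ B₄ ∧ SetsAdjacent H B₃ B₄ :=
  stmt13_general H h2conn c₁ c₂ c₃ s₄ x y hs₄ hxy C₁ C₂ C₃ hcover hd12 hd13 hd23 hconn₁ hconn₂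
    hconn₃ hne12 hne13 hne23 hc₁ hc₂ hc₃
end

section
/- Let G be a finite simple graph, let (A,B) be a separation of G of order 3 with A ∩ B = {c_1, c_2, c_3}, and suppose there are pairwise disjoint sets A_1, A_2, A_3 ⊆ A with c_i, s_i ∈ A_i and G[A_i] connected for each i, where s_1, s_2, s_3 ∈ S, and A_2 is adjacent in G to both A_1 and A_3. If the induced subgraph G[B] contains a K_4-minor rooted at {c_1, c_2, c_3, s_4} for some s_4 ∈ S ∩ (B ∖ A), then G contains an S-rooted K_4-minor. -/
open SimpleGraph

/-
Every branch set `D i` of the minor in `G[B]` contains a root, and every root has its own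
connected attachment (`Aⱼ` for `cⱼ`, `{s₄}` for `s₄`), which meets `S` and meets `B` only in
roots. Adding to each branch set the attachment of one of its roots keeps the branch sets
connected and adjacent, and keeps them disjoint because distinct branch sets contain distinct
roots; now every branch set meets `S`.
-/

open Function

section

variable {V : Type*} {G : SimpleGraph V} {t : ℕ}

theorem IsKMinor.union {D E : Fin t → Set V} (hD : IsKMinor G t D)
    (hEdisj : Pairwise (Disjoint on E)) (hDE : ∀ i j, i ≠ j → Disjoint (D i) (E j))
    (hEconn : ∀ i, (G.induce (E i)).Preconnected) (hmeet : ∀ i, (D i ∩ E i).Nonempty) :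
    IsKMinor G t fun i => D i ∪ E i := by
  obtain ⟨hne, hDdisj, hDconn, hDadj⟩ := hD
  refine ⟨fun i => (hne i).mono Set.subset_union_left, fun i j hij => ?_,
    fun i => induce_union_connected (hDconn i).preconnected (hEconn i) (hmeet i),
    fun i j hij => ?_⟩
  · simp only [Set.disjoint_union_left, Set.disjoint_union_right]
    exact ⟨⟨hDdisj i j hij, (hDE j i hij.symm).symm⟩, hDE i j hij, hEdisj hij⟩
  · obtain ⟨x, hx, y, hy, hxy⟩ := hDadj i j hij
    exact ⟨x, Or.inl hx, y, Or.inl hy, hxy⟩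

theorem IsKMinor.exists_rooted_of_attachments {ι : Type*} {B S : Set V} {r : ι → V}
    {E : ι → Set V} (hEdisj : Pairwise (Disjoint on E))
    (hEconn : ∀ j, (G.induce (E j)).Preconnected) (hrE : ∀ j, r j ∈ E j)
    (hEB : ∀ j, E j ∩ B ⊆ Set.range r) (hES : ∀ j, (E j ∩ S).Nonempty)
    {D : Fin t → Set V} (hD : IsKMinor G t D) (hDB : ∀ i, D i ⊆ B)
    (hroot : ∀ i, (D i ∩ Set.range r).Nonempty) :
    ∃ Bs : Fin t → Set V, IsKMinor G t Bs ∧ ∀ i, (Bs i ∩ S).Nonempty := by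
  choose x hxD f hf using hroot
  have hrD : ∀ i, r (f i) ∈ D i := fun i => hf i ▸ hxD i
  have hf_inj : f.Injective := fun i j hij => by_contra fun hne =>
    Set.disjoint_left.1 (hD.2.1 i j hne) (hrD i) (hij ▸ hrD j)
  have hDE : ∀ i j, i ≠ j → Disjoint (D i) (E (f j)) := by
    refine fun i j hij => Set.disjoint_left.2 fun y hyD hyE => ?_
    obtain ⟨k, rfl⟩ := hEB (f j) ⟨hyE, hDB i hyD⟩
    obtain rfl : k = f j := hEdisj.eq (Set.not_disjoint_iff.2 ⟨r k, hrE k, hyE⟩)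
    exact Set.disjoint_left.1 (hD.2.1 i j hij) hyD (hrD j)
  refine ⟨fun i => D i ∪ E (f i), hD.union (hEdisj.comp_of_injective hf_inj) hDE
    (fun i => hEconn (f i)) (fun i => ⟨r (f i), hrD i, hrE (f i)⟩), fun i => ?_⟩
  obtain ⟨s, hsE, hsS⟩ := hES (f i)
  exact ⟨s, Or.inr hsE, hsS⟩

end

theorem stmt14_general {V : Type*} (G : SimpleGraph V) (S : Set V)
    (A B : Set V)
    (c₁ c₂ c₃ : V) (hAB : A ∩ B = {c₁, c₂, c₃})
    (s₁ s₂ s₃ : V) (hs₁ : s₁ ∈ S) (hs₂ : s₂ ∈ S) (hs₃ : s₃ ∈ S)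
    (A₁ A₂ A₃ : Set V) (hA₁ : A₁ ⊆ A) (hA₂ : A₂ ⊆ A) (hA₃ : A₃ ⊆ A)
    (hd12 : Disjoint A₁ A₂) (hd13 : Disjoint A₁ A₃) (hd23 : Disjoint A₂ A₃)
    (hm₁ : c₁ ∈ A₁ ∧ s₁ ∈ A₁) (hm₂ : c₂ ∈ A₂ ∧ s₂ ∈ A₂) (hm₃ : c₃ ∈ A₃ ∧ s₃ ∈ A₃)
    (hconn₁ : (G.induce A₁).Connected) (hconn₂ : (G.induce A₂).Connected)
    (hconn₃ : (G.induce A₃).Connected)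
    (s₄ : V) (hs₄ : s₄ ∈ S ∩ (B \ A))
    (hminor : ∃ D : Fin 4 → Set V, (∀ i, D i ⊆ B) ∧ IsKMinor G 4 D ∧
      ∀ i, (D i ∩ ({c₁, c₂, c₃, s₄} : Set V)).Nonempty) :
    ∃ Bs : Fin 4 → Set V, IsKMinor G 4 Bs ∧ ∀ i, (Bs i ∩ S).Nonempty := by
  obtain ⟨D, hDB, hD, hroot⟩ := hminor
  obtain ⟨hs₄S, -, hs₄A⟩ := hs₄
  have hrange : Set.range ![c₁, c₂, c₃, s₄] = {c₁, c₂, c₃, s₄} := by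
    simp only [Matrix.range_cons, Matrix.range_empty, Set.union_empty, Set.singleton_union]
  have hs₄A₁ : s₄ ∉ A₁ := fun h => hs₄A (hA₁ h)
  have hs₄A₂ : s₄ ∉ A₂ := fun h => hs₄A (hA₂ h)
  have hs₄A₃ : s₄ ∉ A₃ := fun h => hs₄A (hA₃ h)
  have hAB_range : ∀ {X : Set V}, X ⊆ A → X ∩ B ⊆ Set.range ![c₁, c₂, c₃, s₄] := fun hX =>
    hrange ▸ (Set.inter_subset_inter_left B hX).trans
      (hAB ▸ Set.insert_subset_insert (Set.insert_subset_insert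
        (Set.singleton_subset_iff.2 (Set.mem_insert _ _))))
  refine hD.exists_rooted_of_attachments (r := ![c₁, c₂, c₃, s₄]) (E := ![A₁, A₂, A₃, {s₄}])
    ?_ ?_ ?_ ?_ ?_ hDB (hrange ▸ hroot)
  · intro j k hjk
    simp only [onFun]
    fin_cases j <;> fin_cases k <;>
      simp [hd12, hd13, hd23, hd12.symm, hd13.symm, hd23.symm, hs₄A₁, hs₄A₂, hs₄A₃] at hjk ⊢
  · intro j; fin_cases j
    exacts [hconn₁.preconnected, hconn₂.preconnected, hconn₃.preconnected,
      (induce_singleton_eq_top G s₄ ▸ preconnected_top :)]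
  · intro j; fin_cases j
    exacts [hm₁.1, hm₂.1, hm₃.1, rfl]
  · intro j; fin_cases j
    exacts [hAB_range hA₁, hAB_range hA₂, hAB_range hA₃,
      Set.inter_subset_left.trans (Set.singleton_subset_iff.2 ⟨3, rfl⟩)]
  · intro j; fin_cases j
    exacts [⟨s₁, hm₁.2, hs₁⟩, ⟨s₂, hm₂.2, hs₂⟩, ⟨s₃, hm₃.2, hs₃⟩, ⟨s₄, rfl, hs₄S⟩]

/-- Given a separation `(A,B)` of order 3 with `A ∩ B = {c₁,c₂,c₃}`, disjoint
connected sets `A₁, A₂, A₃ ⊆ A` with `cᵢ, sᵢ ∈ Aᵢ` and `sᵢ ∈ S`, where `A₂` is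
adjacent to `A₁` and `A₃`: if `G[B]` contains a `K₄`-minor rooted at
`{c₁, c₂, c₃, s₄}` for some `s₄ ∈ S ∩ (B ∖ A)`, then `G` has an `S`-rooted
`K₄`-minor. -/
theorem stmt14 {V : Type*} [Fintype V] (G : SimpleGraph V) (S : Set V)
    (A B : Set V) (hsep : IsSeparation G A B)
    (c₁ c₂ c₃ : V) (hAB : A ∩ B = {c₁, c₂, c₃}) (horder : (A ∩ B).ncard = 3)
    (s₁ s₂ s₃ : V) (hs₁ : s₁ ∈ S) (hs₂ : s₂ ∈ S) (hs₃ : s₃ ∈ S)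
    (A₁ A₂ A₃ : Set V) (hA₁ : A₁ ⊆ A) (hA₂ : A₂ ⊆ A) (hA₃ : A₃ ⊆ A)
    (hd12 : Disjoint A₁ A₂) (hd13 : Disjoint A₁ A₃) (hd23 : Disjoint A₂ A₃)
    (hm₁ : c₁ ∈ A₁ ∧ s₁ ∈ A₁) (hm₂ : c₂ ∈ A₂ ∧ s₂ ∈ A₂) (hm₃ : c₃ ∈ A₃ ∧ s₃ ∈ A₃)
    (hconn₁ : (G.induce A₁).Connected) (hconn₂ : (G.induce A₂).Connected)
    (hconn₃ : (G.induce A₃).Connected)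
    (hadj₁ : SetsAdjacent G A₂ A₁) (hadj₃ : SetsAdjacent G A₂ A₃)
    (s₄ : V) (hs₄ : s₄ ∈ S ∩ (B \ A))
    (hminor : ∃ D : Fin 4 → Set V, (∀ i, D i ⊆ B) ∧ IsKMinor G 4 D ∧
      ∀ i, (D i ∩ ({c₁, c₂, c₃, s₄} : Set V)).Nonempty) :
    ∃ Bs : Fin 4 → Set V, IsKMinor G 4 Bs ∧ ∀ i, (Bs i ∩ S).Nonempty :=
  stmt14_general G S A B c₁ c₂ c₃ hAB s₁ s₂ s₃ hs₁ hs₂ hs₃ A₁ A₂ A₃ hA₁ hA₂ hA₃ hd12 hd13 hd23 hm₁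
    hm₂ hm₃ hconn₁ hconn₂ hconn₃ s₄ hs₄ hminor
end
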